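/- arXiv:2312.11483 — 11 statements merged into one kernel-verified Lean document; each statement's English description precedes it below -/
import Mathlib

section
/- Every solution of the plankton–fish system is nonnegative and bounded: if x, y, z : ℝ → ℝ are continuous on [-τmax, ∞), satisfy for all t > 0 the equations x'(t) = r·x(t)·(1 - x(t)/K) - c1·x(t)·y(t), y'(t) = -d1·y(t) + e1·c1·x(t-τ1)·y(t-τ1) - c2·y(t)·z(t), z'(t) = -d2·z(t) + e2·c2·y(t-τ2)·z(t-τ2), and satisfy x(θ) ≥ 0 on [-τ1,0] with x(0) > 0, y(θ) ≥ 0 on [-τmax,0], z(θ) ≥ 0 on [-τ2,0], then there exist constants M1, M2, M3 > 0 such that for all t > 0 one has 0 ≤ x(t) ≤ M1, 0 ≤ y(t) ≤ M2 and 0 ≤ z(t) ≤ M3. -/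
/-!
Each equation has the form `u' = -g(t) u + c(t) u(t - τ)` with `c ≥ 0`. Along any interval on
which the delayed values are nonnegative, `u · exp (∫ g)` is nondecreasing, so `u` cannot become
negative; the method of steps covers `[0, ∞)` by intervals of length `τ` (for `τ = 0` the delayed
term is absorbed into `g`).

For the bounds, `x' ≤ r (K - x)` gives `x ≤ max (x 0) K`. In `W(t) = e1 x(t) + y(t + τ1)` and
`U(t) = e2 y(t) + z(t + τ2)` the predation terms cancel, leaving `W' ≤ d1 (A - W)` and
`U' ≤ d2 (B - U)`; the integrating factor `exp (β t)` turns `f' ≤ β (A - f)` into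
`f ≤ max (f 0) A`. The remaining initial segments are compact.
-/

open Set Real

theorem exists_hasDerivAt_of_continuousOn_Icc {g : ℝ → ℝ} {a b : ℝ} (hab : a ≤ b)
    (hg : ContinuousOn g (Icc a b)) :
    ∃ G : ℝ → ℝ, ContinuousOn G (Icc a b) ∧ ∀ t ∈ Ioo a b, HasDerivAt G (g t) t := by
  refine ⟨fun t => ∫ s in a..t, g s, ?_, fun t ht => ?_⟩
  · rw [← uIcc_of_le hab] at hg ⊢
    exact intervalIntegral.continuousOn_primitive_interval hg.integrableOn_uIcc
  · exact intervalIntegral.integral_hasDerivAt_right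
      ((hg.mono (Icc_subset_Icc_right ht.2.le)).intervalIntegrable_of_Icc ht.1.le)
      ((hg.mono Ioo_subset_Icc_self).stronglyMeasurableAtFilter isOpen_Ioo t ht)
      (hg.continuousAt (Icc_mem_nhds ht.1 ht.2))

theorem monotoneOn_mul_exp_of_hasDerivAt {u u' G g : ℝ → ℝ} {a b : ℝ}
    (hu : ContinuousOn u (Icc a b)) (hG : ContinuousOn G (Icc a b))
    (hu' : ∀ t ∈ Ioo a b, HasDerivAt u (u' t) t) (hG' : ∀ t ∈ Ioo a b, HasDerivAt G (g t) t)
    (h : ∀ t ∈ Ioo a b, 0 ≤ u' t + g t * u t) :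
    MonotoneOn (fun t => u t * exp (G t)) (Icc a b) := by
  refine monotoneOn_of_hasDerivWithinAt_nonneg (convex_Icc a b)
    (hu.mul (continuous_exp.comp_continuousOn hG)) (fun t ht => ?_) (fun t ht => ?_)
    (f' := fun t => (u' t + g t * u t) * exp (G t))
  · rw [interior_Icc] at ht ⊢
    exact (((hu' t ht).mul (hG' t ht).exp).congr_deriv (by ring)).hasDerivWithinAt
  · rw [interior_Icc] at ht
    exact mul_nonneg (h t ht) (exp_pos _).le

theorem nonneg_of_hasDerivAt_eq_neg_mul_add {y g h : ℝ → ℝ} {a b : ℝ} (hab : a ≤ b)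
    (hy : ContinuousOn y (Icc a b)) (hg : ContinuousOn g (Icc a b))
    (hy' : ∀ t ∈ Ioo a b, HasDerivAt y (-g t * y t + h t) t) (hh : ∀ t ∈ Ioo a b, 0 ≤ h t)
    (ha : 0 ≤ y a) : 0 ≤ y b := by
  obtain ⟨G, hG, hG'⟩ := exists_hasDerivAt_of_continuousOn_Icc hab hg
  have hmono := monotoneOn_mul_exp_of_hasDerivAt hy hG hy' hG' fun t ht => by
    simpa using hh t ht
  have : y a * exp (G a) ≤ y b * exp (G b) :=
    hmono (left_mem_Icc.2 hab) (right_mem_Icc.2 hab) hab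
  exact nonneg_of_mul_nonneg_left ((mul_nonneg ha (exp_pos _).le).trans this) (exp_pos _)

theorem nonneg_of_hasDerivAt_delay_of_pos {y g c : ℝ → ℝ} {τ σ : ℝ} (hτ : 0 < τ) (hτσ : τ ≤ σ)
    (hy : ContinuousOn y (Ici 0)) (hg : ContinuousOn g (Ici 0)) (hc : ∀ t > 0, 0 ≤ c t)
    (hy' : ∀ t > 0, HasDerivAt y (-g t * y t + c t * y (t - τ)) t)
    (hinit : ∀ s ∈ Icc (-σ) 0, 0 ≤ y s) :
    ∀ t ≥ -σ, 0 ≤ y t := by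
  have hsteps : ∀ n : ℕ, ∀ s ∈ Icc (-σ) (n * τ), 0 ≤ y s := by
    intro n
    induction n with
    | zero => simpa using hinit
    | succ n ih =>
      rintro s ⟨hσs, hs⟩
      rcases le_or_gt s (n * τ) with h | h
      · exact ih s ⟨hσs, h⟩
      have hn : (0 : ℝ) ≤ n * τ := by positivity
      have hsub : Icc (n * τ : ℝ) s ⊆ Ici 0 := fun t ht => hn.trans ht.1
      refine nonneg_of_hasDerivAt_eq_neg_mul_add h.le (hy.mono hsub) (hg.mono hsub)
        (fun t ht => hy' t (hn.trans_lt ht.1)) (fun t ht => ?_) (ih _ ⟨by linarith, le_rfl⟩)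
      refine mul_nonneg (hc t (hn.trans_lt ht.1)) (ih _ ⟨by linarith [ht.1], ?_⟩)
      push_cast at hs
      linarith [ht.2]
  intro t ht
  obtain ⟨n, hn⟩ := exists_nat_ge (t / τ)
  exact hsteps n t ⟨ht, (div_le_iff₀ hτ).1 hn⟩

theorem nonneg_of_hasDerivAt_delay {y g c : ℝ → ℝ} {τ σ : ℝ} (hτ : 0 ≤ τ) (hτσ : τ ≤ σ)
    (hy : ContinuousOn y (Ici 0)) (hg : ContinuousOn g (Ici 0)) (hcc : ContinuousOn c (Ici 0))
    (hc : ∀ t > 0, 0 ≤ c t) (hy' : ∀ t > 0, HasDerivAt y (-g t * y t + c t * y (t - τ)) t)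
    (hinit : ∀ s ∈ Icc (-σ) 0, 0 ≤ y s) :
    ∀ t ≥ -σ, 0 ≤ y t := by
  rcases hτ.eq_or_lt with rfl | hτ
  · intro t ht
    rcases le_or_gt t 0 with h | h
    · exact hinit t ⟨ht, h⟩
    have hsub : Icc 0 t ⊆ Ici 0 := Icc_subset_Ici_self
    exact nonneg_of_hasDerivAt_eq_neg_mul_add (g := g - c) (h := 0) h.le (hy.mono hsub)
      ((hg.sub hcc).mono hsub)
      (fun s hs => (hy' s hs.1).congr_deriv
        (by simp only [sub_zero, Pi.sub_apply, Pi.zero_apply]; ring))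
      (fun _ _ => le_rfl) (hinit 0 ⟨by linarith, le_rfl⟩)
  · exact nonneg_of_hasDerivAt_delay_of_pos hτ hτσ hy hg hc hy' hinit

theorem le_max_of_hasDerivAt_le_mul_sub {f f' : ℝ → ℝ} {β A : ℝ} (hβ : 0 ≤ β)
    (hf : ContinuousOn f (Ici 0)) (hf' : ∀ t > 0, HasDerivAt f (f' t) t)
    (hle : ∀ t > 0, f' t ≤ β * (A - f t)) :
    ∀ t ≥ 0, f t ≤ max (f 0) A := by
  intro t ht
  have hmono := monotoneOn_mul_exp_of_hasDerivAt (u := fun s => A - f s) (G := fun s => β * s)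
    (u' := fun s => -f' s) (g := fun _ => β) (a := 0) (b := t)
    (continuousOn_const.sub (hf.mono Icc_subset_Ici_self)) (by fun_prop)
    (fun s hs => (hf' s hs.1).const_sub A) (fun s _ => hasDerivAt_const_mul β)
    (fun s hs => by linarith [hle s hs.1])
  have key : A - f 0 ≤ (A - f t) * exp (β * t) := by
    simpa using hmono (left_mem_Icc.2 ht) (right_mem_Icc.2 ht) ht
  rcases le_or_gt (f t) A with h | h
  · exact h.trans (le_max_right _ _)
  · have hexp : 1 ≤ exp (β * t) := one_le_exp (mul_nonneg hβ ht)
    have : (A - f t) * exp (β * t) ≤ A - f t := by nlinarith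
    exact le_max_of_le_left (by linarith)

theorem bddAbove_image_Ici_of_continuousOn_Icc {f : ℝ → ℝ} {a b : ℝ}
    (hf : ContinuousOn f (Icc a b)) (hb : BddAbove (f '' Ici b)) : BddAbove (f '' Ici a) :=
  ((isCompact_Icc.bddAbove_image hf).union hb).mono
    (image_union f _ _ ▸ image_mono Ici_subset_Icc_union_Ici)

theorem bddAbove_image_Ici_of_hasDerivAt_add_shift {u v u' v' : ℝ → ℝ} {e d A τ : ℝ}
    (he : 0 ≤ e) (hd : 0 ≤ d) (hτ : 0 ≤ τ) (hu : ContinuousOn u (Ici 0))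
    (hv : ContinuousOn v (Ici 0)) (hu0 : ∀ t ≥ 0, 0 ≤ u t)
    (hu' : ∀ t > 0, HasDerivAt u (u' t) t) (hv' : ∀ t > 0, HasDerivAt v (v' t) t)
    (hle : ∀ t > 0, e * u' t + v' (t + τ) ≤ d * (A - (e * u t + v (t + τ)))) :
    BddAbove (v '' Ici 0) := by
  set W : ℝ → ℝ := fun t => e * u t + v (t + τ)
  have hWc : ContinuousOn W (Ici 0) :=
    (continuousOn_const.mul hu).add (hv.comp (by fun_prop) fun t (ht : 0 ≤ t) =>
      show 0 ≤ t + τ by linarith)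
  have hW' : ∀ t > 0, HasDerivAt W (e * u' t + v' (t + τ)) t := fun t ht =>
    ((hu' t ht).const_mul e).add
      (((hv' (t + τ) (by linarith)).comp t ((hasDerivAt_id t).add_const τ)).congr_deriv
        (mul_one _))
  have hW := le_max_of_hasDerivAt_le_mul_sub hd hWc hW' hle
  refine bddAbove_image_Ici_of_continuousOn_Icc (b := τ) (hv.mono Icc_subset_Ici_self)
    ⟨max (W 0) A, ?_⟩
  rintro _ ⟨s, hs : τ ≤ s, rfl⟩
  have hWs := hW (s - τ) (sub_nonneg.2 hs)
  simp only [W, sub_add_cancel] at hWs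
  linarith [mul_nonneg he (hu0 (s - τ) (sub_nonneg.2 hs))]

structure PlanktonFishSolution (r K d1 d2 c1 c2 e1 e2 τ1 τ2 : ℝ) (x y z : ℝ → ℝ) : Prop where
  continuousOn_x : ContinuousOn x (Ici (-max τ1 τ2))
  continuousOn_y : ContinuousOn y (Ici (-max τ1 τ2))
  continuousOn_z : ContinuousOn z (Ici (-max τ1 τ2))
  hasDerivAt_x : ∀ t > (0:ℝ), HasDerivAt x (r * x t * (1 - x t / K) - c1 * x t * y t) t
  hasDerivAt_y : ∀ t > (0:ℝ),
    HasDerivAt y (-d1 * y t + e1 * c1 * x (t - τ1) * y (t - τ1) - c2 * y t * z t) t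
  hasDerivAt_z : ∀ t > (0:ℝ), HasDerivAt z (-d2 * z t + e2 * c2 * y (t - τ2) * z (t - τ2)) t
  x_init : ∀ θ ∈ Icc (-τ1) 0, 0 ≤ x θ
  y_init : ∀ θ ∈ Icc (-max τ1 τ2) 0, 0 ≤ y θ
  z_init : ∀ θ ∈ Icc (-τ2) 0, 0 ≤ z θ

namespace PlanktonFishSolution

variable {r K d1 d2 c1 c2 e1 e2 τ1 τ2 : ℝ} {x y z : ℝ → ℝ}

theorem continuousOn_Ici (hs : PlanktonFishSolution r K d1 d2 c1 c2 e1 e2 τ1 τ2 x y z)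
    {a : ℝ} (ha : -max τ1 τ2 ≤ a) :
    ContinuousOn x (Ici a) ∧ ContinuousOn y (Ici a) ∧ ContinuousOn z (Ici a) :=
  ⟨hs.continuousOn_x.mono (Ici_subset_Ici.2 ha), hs.continuousOn_y.mono (Ici_subset_Ici.2 ha),
    hs.continuousOn_z.mono (Ici_subset_Ici.2 ha)⟩

theorem x_nonneg (hs : PlanktonFishSolution r K d1 d2 c1 c2 e1 e2 τ1 τ2 x y z) (hτ1 : 0 ≤ τ1) :
    ∀ t ≥ -τ1, 0 ≤ x t := by
  obtain ⟨hxc, hyc, -⟩ := hs.continuousOn_Ici (a := 0) (by simp [hτ1])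
  exact nonneg_of_hasDerivAt_delay (c := 0) hτ1 le_rfl hxc
    (((continuousOn_const.mul hyc).sub continuousOn_const).add
      ((continuousOn_const.mul hxc).div_const K))
    continuousOn_const (fun _ _ => le_rfl)
    (fun t ht => (hs.hasDerivAt_x t ht).congr_deriv
      (g' := -(c1 * y t - r + r * x t / K) * x t + 0 * x (t - τ1)) (by ring))
    hs.x_init

theorem y_nonneg (hs : PlanktonFishSolution r K d1 d2 c1 c2 e1 e2 τ1 τ2 x y z)
    (hc1 : 0 ≤ c1) (he1 : 0 ≤ e1) (hτ1 : 0 ≤ τ1) :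
    ∀ t ≥ -max τ1 τ2, 0 ≤ y t := by
  obtain ⟨-, hyc, hzc⟩ := hs.continuousOn_Ici (a := 0) (by simp [hτ1])
  have hxc : ContinuousOn (fun t => x (t - τ1)) (Ici 0) :=
    (hs.continuousOn_Ici (a := -τ1) (by simp)).1.comp (by fun_prop)
      fun t (ht : 0 ≤ t) => show -τ1 ≤ t - τ1 by linarith
  exact nonneg_of_hasDerivAt_delay hτ1 (le_max_left τ1 τ2) hyc
    (continuousOn_const.add (continuousOn_const.mul hzc)) (continuousOn_const.mul hxc)
    (fun t ht => mul_nonneg (mul_nonneg he1 hc1) (hs.x_nonneg hτ1 _ (by linarith)))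
    (fun t ht => (hs.hasDerivAt_y t ht).congr_deriv
      (g' := -(d1 + c2 * z t) * y t + e1 * c1 * x (t - τ1) * y (t - τ1)) (by ring))
    hs.y_init

theorem z_nonneg (hs : PlanktonFishSolution r K d1 d2 c1 c2 e1 e2 τ1 τ2 x y z)
    (hc1 : 0 ≤ c1) (hc2 : 0 ≤ c2) (he1 : 0 ≤ e1) (he2 : 0 ≤ e2) (hτ1 : 0 ≤ τ1) (hτ2 : 0 ≤ τ2) :
    ∀ t ≥ -τ2, 0 ≤ z t := by
  obtain ⟨-, -, hzc⟩ := hs.continuousOn_Ici (a := 0) (by simp [hτ1])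
  have hyc : ContinuousOn (fun t => y (t - τ2)) (Ici 0) :=
    (hs.continuousOn_Ici (a := -τ2) (by simp)).2.1.comp (by fun_prop)
      fun t (ht : 0 ≤ t) => show -τ2 ≤ t - τ2 by linarith
  exact nonneg_of_hasDerivAt_delay hτ2 le_rfl hzc continuousOn_const (continuousOn_const.mul hyc)
    (fun t ht => mul_nonneg (mul_nonneg he2 hc2)
      (hs.y_nonneg hc1 he1 hτ1 _ (by linarith [le_max_right τ1 τ2])))
    hs.hasDerivAt_z hs.z_init

theorem x_bddAbove (hs : PlanktonFishSolution r K d1 d2 c1 c2 e1 e2 τ1 τ2 x y z)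
    (hr : 0 ≤ r) (hK : 0 < K) (hc1 : 0 ≤ c1) (he1 : 0 ≤ e1) (hτ1 : 0 ≤ τ1) :
    BddAbove (x '' Ici 0) := by
  obtain ⟨hxc, -, -⟩ := hs.continuousOn_Ici (a := 0) (by simp [hτ1])
  refine ⟨max (x 0) K, forall_mem_image.2
    (le_max_of_hasDerivAt_le_mul_sub hr hxc hs.hasDerivAt_x fun t ht => ?_)⟩
  have hx := hs.x_nonneg hτ1 t (by linarith)
  have hy := hs.y_nonneg hc1 he1 hτ1 t (by linarith [le_max_left τ1 τ2])
  have hlogistic : r * x t * (1 - x t / K) = r * (K - x t) - r * (K - x t) ^ 2 / K := by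
    field_simp; ring
  have hsq : 0 ≤ r * (K - x t) ^ 2 / K := by positivity
  nlinarith [mul_nonneg (mul_nonneg hc1 hx) hy]

theorem y_bddAbove (hs : PlanktonFishSolution r K d1 d2 c1 c2 e1 e2 τ1 τ2 x y z)
    (hr : 0 ≤ r) (hK : 0 < K) (hd1 : 0 < d1) (hc1 : 0 ≤ c1) (hc2 : 0 ≤ c2) (he1 : 0 ≤ e1)
    (he2 : 0 ≤ e2) (hτ1 : 0 ≤ τ1) (hτ2 : 0 ≤ τ2) :
    BddAbove (y '' Ici 0) := by
  obtain ⟨hxc, hyc, -⟩ := hs.continuousOn_Ici (a := 0) (by simp [hτ1])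
  obtain ⟨M, hM⟩ := hs.x_bddAbove hr hK hc1 he1 hτ1
  -- the logistic term is at most `r x ≤ r M`, and `d1 e1 x ≤ d1 e1 M`
  refine bddAbove_image_Ici_of_hasDerivAt_add_shift (A := e1 * M + e1 * r * M / d1) he1 hd1.le
    hτ1 hxc hyc (fun t ht => hs.x_nonneg hτ1 t (by linarith)) hs.hasDerivAt_x hs.hasDerivAt_y
    fun t ht => ?_
  simp only [add_sub_cancel_right]
  have hx := hs.x_nonneg hτ1 t (by linarith)
  have hxM : x t ≤ M := hM (mem_image_of_mem x ht.le)
  have hyz : 0 ≤ y (t + τ1) * z (t + τ1) :=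
    mul_nonneg (hs.y_nonneg hc1 he1 hτ1 _ (by linarith [le_max_left τ1 τ2]))
      (hs.z_nonneg hc1 hc2 he1 he2 hτ1 hτ2 _ (by linarith))
  have hdiv : d1 * (e1 * r * M / d1) = e1 * r * M := by field_simp
  have hquad : 0 ≤ x t * (x t / K) := by positivity
  nlinarith [mul_le_mul_of_nonneg_left hxM (mul_nonneg he1 hr),
    mul_le_mul_of_nonneg_left hxM (mul_nonneg hd1.le he1), mul_nonneg hc2 hyz,
    mul_nonneg (mul_nonneg he1 hr) hquad]

theorem z_bddAbove (hs : PlanktonFishSolution r K d1 d2 c1 c2 e1 e2 τ1 τ2 x y z)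
    (hr : 0 ≤ r) (hK : 0 < K) (hd1 : 0 < d1) (hd2 : 0 < d2) (hc1 : 0 ≤ c1) (hc2 : 0 ≤ c2)
    (he1 : 0 ≤ e1) (he2 : 0 ≤ e2) (hτ1 : 0 ≤ τ1) (hτ2 : 0 ≤ τ2) :
    BddAbove (z '' Ici 0) := by
  obtain ⟨hxc, hyc, -⟩ := hs.continuousOn_Ici (a := -τ1) (by simp)
  obtain ⟨-, hyc0, hzc0⟩ := hs.continuousOn_Ici (a := 0) (by simp [hτ1])
  obtain ⟨Mx, hMx⟩ := bddAbove_image_Ici_of_continuousOn_Icc (hxc.mono Icc_subset_Ici_self)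
    (hs.x_bddAbove hr hK hc1 he1 hτ1)
  obtain ⟨My, hMy⟩ := bddAbove_image_Ici_of_continuousOn_Icc (hyc.mono Icc_subset_Ici_self)
    (hs.y_bddAbove hr hK hd1 hc1 hc2 he1 he2 hτ1 hτ2)
  have hy0 : ∀ t ≥ -τ1, 0 ≤ y t := fun t ht => hs.y_nonneg hc1 he1 hτ1 t
    (le_trans (by simp) ht)
  -- the delayed gain is at most `e2 e1 c1 Mx My`, and `d2 e2 y ≤ d2 e2 My`
  refine bddAbove_image_Ici_of_hasDerivAt_add_shift (A := e2 * My + e2 * e1 * c1 * Mx * My / d2)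
    he2 hd2.le hτ2 hyc0 hzc0 (fun t ht => hy0 t (by linarith)) hs.hasDerivAt_y hs.hasDerivAt_z
    fun t ht => ?_
  simp only [add_sub_cancel_right]
  have hy := hy0 t (by linarith)
  have hyM : y t ≤ My := hMy (mem_image_of_mem y (show -τ1 ≤ t by linarith))
  have hτ : -τ1 ≤ t - τ1 := by linarith
  have hxyM : x (t - τ1) * y (t - τ1) ≤ Mx * My :=
    mul_le_mul (hMx (mem_image_of_mem x hτ)) (hMy (mem_image_of_mem y hτ)) (hy0 _ hτ)
      ((hs.x_nonneg hτ1 _ hτ).trans (hMx (mem_image_of_mem x hτ)))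
  have hdiv : d2 * (e2 * e1 * c1 * Mx * My / d2) = e2 * e1 * c1 * Mx * My := by field_simp
  nlinarith [mul_le_mul_of_nonneg_left hxyM (mul_nonneg (mul_nonneg he2 he1) hc1),
    mul_le_mul_of_nonneg_left hyM (mul_nonneg hd2.le he2), mul_nonneg (mul_nonneg he2 hd1.le) hy]

end PlanktonFishSolution

theorem plankton_fish_solutions_nonneg_bounded_general
    (r K d1 d2 c1 c2 e1 e2 τ1 τ2 : ℝ)
    (hr : 0 < r) (hK : 0 < K) (hd1 : 0 < d1) (hd2 : 0 < d2)
    (hc1 : 0 < c1) (hc2 : 0 < c2) (he1 : 0 < e1) (he2 : 0 < e2)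
    (hτ1 : 0 ≤ τ1) (hτ2 : 0 ≤ τ2)
    (x y z : ℝ → ℝ)
    (hxc : ContinuousOn x (Set.Ici (-(max τ1 τ2))))
    (hyc : ContinuousOn y (Set.Ici (-(max τ1 τ2))))
    (hzc : ContinuousOn z (Set.Ici (-(max τ1 τ2))))
    (hx' : ∀ t > (0:ℝ),
      HasDerivAt x (r * x t * (1 - x t / K) - c1 * x t * y t) t)
    (hy' : ∀ t > (0:ℝ),
      HasDerivAt y (-d1 * y t + e1 * c1 * x (t - τ1) * y (t - τ1) - c2 * y t * z t) t)
    (hz' : ∀ t > (0:ℝ),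
      HasDerivAt z (-d2 * z t + e2 * c2 * y (t - τ2) * z (t - τ2)) t)
    (hxinit : ∀ θ ∈ Set.Icc (-τ1) (0:ℝ), 0 ≤ x θ)
    (hyinit : ∀ θ ∈ Set.Icc (-(max τ1 τ2)) (0:ℝ), 0 ≤ y θ)
    (hzinit : ∀ θ ∈ Set.Icc (-τ2) (0:ℝ), 0 ≤ z θ) :
    ∃ M1 M2 M3 : ℝ, 0 < M1 ∧ 0 < M2 ∧ 0 < M3 ∧
      ∀ t > (0:ℝ), (0 ≤ x t ∧ x t ≤ M1) ∧ (0 ≤ y t ∧ y t ≤ M2) ∧ (0 ≤ z t ∧ z t ≤ M3) := by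
  have hs : PlanktonFishSolution r K d1 d2 c1 c2 e1 e2 τ1 τ2 x y z :=
    ⟨hxc, hyc, hzc, hx', hy', hz', hxinit, hyinit, hzinit⟩
  obtain ⟨M1, hM1⟩ := hs.x_bddAbove hr.le hK hc1.le he1.le hτ1
  obtain ⟨M2, hM2⟩ := hs.y_bddAbove hr.le hK hd1 hc1.le hc2.le he1.le he2.le hτ1 hτ2
  obtain ⟨M3, hM3⟩ := hs.z_bddAbove hr.le hK hd1 hd2 hc1.le hc2.le he1.le he2.le hτ1 hτ2
  refine ⟨max M1 1, max M2 1, max M3 1, by positivity, by positivity, by positivity,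
    fun t ht => ⟨⟨?_, ?_⟩, ⟨?_, ?_⟩, ⟨?_, ?_⟩⟩⟩
  · exact hs.x_nonneg hτ1 t (by linarith)
  · exact (hM1 (mem_image_of_mem x ht.le)).trans (le_max_left _ _)
  · exact hs.y_nonneg hc1.le he1.le hτ1 t (by linarith [le_max_left τ1 τ2])
  · exact (hM2 (mem_image_of_mem y ht.le)).trans (le_max_left _ _)
  · exact hs.z_nonneg hc1.le hc2.le he1.le he2.le hτ1 hτ2 t (by linarith)
  · exact (hM3 (mem_image_of_mem z ht.le)).trans (le_max_left _ _)

/-- Every solution of the plankton–fish system (1) with nonnegative initial data (2)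
is nonnegative and bounded on `(0, ∞)`. -/
theorem plankton_fish_solutions_nonneg_bounded
    (r K d1 d2 c1 c2 e1 e2 τ1 τ2 : ℝ)
    (hr : 0 < r) (hK : 0 < K) (hd1 : 0 < d1) (hd2 : 0 < d2)
    (hc1 : 0 < c1) (hc2 : 0 < c2) (he1 : 0 < e1) (he2 : 0 < e2)
    (hτ1 : 0 ≤ τ1) (hτ2 : 0 ≤ τ2)
    (x y z : ℝ → ℝ)
    (hxc : ContinuousOn x (Set.Ici (-(max τ1 τ2))))
    (hyc : ContinuousOn y (Set.Ici (-(max τ1 τ2))))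
    (hzc : ContinuousOn z (Set.Ici (-(max τ1 τ2))))
    (hx' : ∀ t > (0:ℝ),
      HasDerivAt x (r * x t * (1 - x t / K) - c1 * x t * y t) t)
    (hy' : ∀ t > (0:ℝ),
      HasDerivAt y (-d1 * y t + e1 * c1 * x (t - τ1) * y (t - τ1) - c2 * y t * z t) t)
    (hz' : ∀ t > (0:ℝ),
      HasDerivAt z (-d2 * z t + e2 * c2 * y (t - τ2) * z (t - τ2)) t)
    (hxinit : ∀ θ ∈ Set.Icc (-τ1) (0:ℝ), 0 ≤ x θ) (hxinit0 : 0 < x 0)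
    (hyinit : ∀ θ ∈ Set.Icc (-(max τ1 τ2)) (0:ℝ), 0 ≤ y θ)
    (hzinit : ∀ θ ∈ Set.Icc (-τ2) (0:ℝ), 0 ≤ z θ) :
    ∃ M1 M2 M3 : ℝ, 0 < M1 ∧ 0 < M2 ∧ 0 < M3 ∧
      ∀ t > (0:ℝ), (0 ≤ x t ∧ x t ≤ M1) ∧ (0 ≤ y t ∧ y t ≤ M2) ∧ (0 ≤ z t ∧ z t ≤ M3) :=
  plankton_fish_solutions_nonneg_bounded_general r K d1 d2 c1 c2 e1 e2 τ1 τ2 hr hK hd1 hd2 hc1 hc2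
    he1 he2 hτ1 hτ2 x y z hxc hyc hzc hx' hy' hz' hxinit hyinit hzinit
end

section
/- Classification of nonnegative equilibria, case 1: assume d1 ≥ e1·c1·K. A point (x̄, ȳ, z̄) ∈ ℝ³ with x̄, ȳ, z̄ ≥ 0 satisfies the equilibrium equations r·x̄·(1 - x̄/K) - c1·x̄·ȳ = 0, -d1·ȳ + e1·c1·x̄·ȳ - c2·ȳ·z̄ = 0, -d2·z̄ + e2·c2·ȳ·z̄ = 0 if and only if (x̄, ȳ, z̄) = (0,0,0) or (x̄, ȳ, z̄) = (K,0,0). -/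
/-! If `ȳ` were positive, the second equation would force
`e₁c₁x̄ = d₁ + c₂z̄ ≥ d₁ ≥ e₁c₁K`, i.e. `x̄ ≥ K`, while the first would force
`r(1 - x̄/K) = c₁ȳ > 0`, i.e. `x̄ < K`. Hence `ȳ = 0`, then `z̄ = 0` from the third equation, and
the first reduces to the logistic equation, whose zeros are `0` and `K`. -/

theorem logistic_eq_zero_iff {r K x : ℝ} (hr : r ≠ 0) (hK : K ≠ 0) :
    r * x * (1 - x / K) = 0 ↔ x = 0 ∨ x = K := by
  rw [mul_eq_zero, mul_eq_zero, sub_eq_zero, eq_comm (a := 1), div_eq_one_iff_eq hK]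
  simp [hr]

theorem lt_of_logistic_sub_predation_eq_zero {r K c x y : ℝ} (hr : 0 < r) (hK : 0 < K)
    (hx : 0 < x) (hcy : 0 < c * y) (h : r * x * (1 - x / K) - c * x * y = 0) : x < K := by
  have hrate : r * (1 - x / K) = c * y := by
    apply mul_left_cancel₀ hx.ne'
    linear_combination h
  have : x / K < 1 := by nlinarith
  rwa [div_lt_one hK] at this

theorem le_of_predator_growth_eq_zero {d a c K x y z : ℝ} (ha : 0 < a) (hy : y ≠ 0)
    (hcz : 0 ≤ c * z) (hcase : a * K ≤ d) (h : -d * y + a * x * y - c * y * z = 0) :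
    K ≤ x := by
  have hrate : a * x = d + c * z := by
    apply mul_left_cancel₀ hy
    linear_combination h
  exact le_of_mul_le_mul_left (by linarith) ha

theorem plankton_fish_equilibria_case1_general
    (r K d1 d2 c1 c2 e1 e2 : ℝ)
    (hr : 0 < r) (hK : 0 < K) (hd2 : 0 < d2)
    (hc1 : 0 < c1) (hc2 : 0 < c2) (he1 : 0 < e1)
    (hcase : e1 * c1 * K ≤ d1)
    (xb yb zb : ℝ) (hy : 0 ≤ yb) (hz : 0 ≤ zb) :
    (r * xb * (1 - xb / K) - c1 * xb * yb = 0 ∧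
     -d1 * yb + e1 * c1 * xb * yb - c2 * yb * zb = 0 ∧
     -d2 * zb + e2 * c2 * yb * zb = 0)
    ↔ ((xb, yb, zb) = ((0:ℝ), (0:ℝ), (0:ℝ)) ∨ (xb, yb, zb) = (K, (0:ℝ), (0:ℝ))) := by
  constructor
  · rintro ⟨h1, h2, h3⟩
    have hy0 : yb = 0 := by
      by_contra hy0
      have hKx : K ≤ xb := le_of_predator_growth_eq_zero (by positivity) hy0
        (mul_nonneg hc2.le hz) hcase h2
      have hcy : 0 < c1 * yb := mul_pos hc1 (lt_of_le_of_ne hy (Ne.symm hy0))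
      exact (lt_of_logistic_sub_predation_eq_zero hr hK (hK.trans_le hKx) hcy h1).not_ge hKx
    subst hy0
    have hz0 : zb = 0 := by simpa [hd2.ne'] using h3
    subst hz0
    simpa [logistic_eq_zero_iff hr.ne' hK.ne'] using h1
  · rintro (h | h) <;> simp only [Prod.mk.injEq] at h <;> obtain ⟨rfl, rfl, rfl⟩ := h <;>
      simp [hK.ne']

/-- Classification of nonnegative equilibria of the plankton–fish system (1), case 1:
if `d1 ≥ e1 c1 K` then the only nonnegative equilibria are `(0,0,0)` and `(K,0,0)`. -/
theorem plankton_fish_equilibria_case1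
    (r K d1 d2 c1 c2 e1 e2 : ℝ)
    (hr : 0 < r) (hK : 0 < K) (hd1 : 0 < d1) (hd2 : 0 < d2)
    (hc1 : 0 < c1) (hc2 : 0 < c2) (he1 : 0 < e1) (he2 : 0 < e2)
    (hcase : e1 * c1 * K ≤ d1)
    (xb yb zb : ℝ) (hx : 0 ≤ xb) (hy : 0 ≤ yb) (hz : 0 ≤ zb) :
    (r * xb * (1 - xb / K) - c1 * xb * yb = 0 ∧
     -d1 * yb + e1 * c1 * xb * yb - c2 * yb * zb = 0 ∧
     -d2 * zb + e2 * c2 * yb * zb = 0)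
    ↔ ((xb, yb, zb) = ((0:ℝ), (0:ℝ), (0:ℝ)) ∨ (xb, yb, zb) = (K, (0:ℝ), (0:ℝ))) :=
  plankton_fish_equilibria_case1_general r K d1 d2 c1 c2 e1 e2 hr hK hd2 hc1 hc2 he1 hcase xb yb zb
    hy hz
end

section
/- Classification of nonnegative equilibria, case 2: assume e1·c1·K·(1 - c1·d2/(e2·c2·r)) ≤ d1 < e1·c1·K. A point (x̄, ȳ, z̄) ∈ ℝ³ with x̄, ȳ, z̄ ≥ 0 satisfies the equilibrium equations r·x̄·(1 - x̄/K) - c1·x̄·ȳ = 0, -d1·ȳ + e1·c1·x̄·ȳ - c2·ȳ·z̄ = 0, -d2·z̄ + e2·c2·ȳ·z̄ = 0 if and only if (x̄, ȳ, z̄) ∈ { (0,0,0), (K,0,0), (x0, y0, 0) }, where x0 = d1/(e1·c1) and y0 = (r/c1)·(1 - d1/(e1·c1·K)). -/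
/-!
A fish population `z > 0` forces `e2 c2 y = d2`, then `e1 c1 x = d1 + c2 z > d1` and, from the
logistic equation, `e1 c1 x = e1 c1 K (1 - c1 d2 / (e2 c2 r))`; the case hypothesis makes the
last quantity at most `d1`, a contradiction. With `z = 0` the system is the logistic
predator–prey model, whose equilibria are found by factoring out `x` and `y`.
-/

lemma logistic_predator_prey_equilibrium_iff {r K d1 c1 e1 x y : ℝ}
    (hr : r ≠ 0) (hK : K ≠ 0) (hd1 : d1 ≠ 0) (hc1 : c1 ≠ 0) (he1 : e1 ≠ 0) :
    (r * x * (1 - x / K) - c1 * x * y = 0 ∧ -d1 * y + e1 * c1 * x * y = 0) ↔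
      (x = 0 ∧ y = 0) ∨ (x = K ∧ y = 0) ∨
        (x = d1 / (e1 * c1) ∧ y = r / c1 * (1 - d1 / (e1 * c1 * K))) := by
  constructor
  · rintro ⟨h1, h2⟩
    have hy : y * (e1 * c1 * x - d1) = 0 := by linear_combination h2
    have hx : x * (r * (1 - x / K) - c1 * y) = 0 := by linear_combination h1
    rcases mul_eq_zero.1 hx with rfl | hlog
    · exact Or.inl ⟨rfl, by simpa [hd1] using h2⟩
    rcases mul_eq_zero.1 hy with rfl | hpred
    · have : 1 - x / K = 0 := by simpa [hr] using hlog
      exact Or.inr (Or.inl ⟨by field_simp at this; linarith, rfl⟩)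
    have hx0 : x = d1 / (e1 * c1) := by field_simp; linarith
    refine Or.inr (Or.inr ⟨hx0, ?_⟩)
    subst hx0
    field_simp at hlog ⊢
    linear_combination -hlog
  · rintro (⟨rfl, rfl⟩ | ⟨rfl, rfl⟩ | ⟨rfl, rfl⟩)
    · simp
    · exact ⟨by field_simp; ring, by ring⟩
    · constructor <;> field_simp <;> ring

lemma fish_eq_zero_of_equilibrium {r K d1 d2 c1 c2 e1 e2 x y z : ℝ}
    (hr : r ≠ 0) (hK : K ≠ 0) (hd1 : 0 ≤ d1) (hd2 : d2 ≠ 0) (hc2 : 0 < c2) (he2 : e2 ≠ 0)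
    (hcase : e1 * c1 * K * (1 - c1 * d2 / (e2 * c2 * r)) ≤ d1) (hz : 0 ≤ z)
    (h1 : r * x * (1 - x / K) - c1 * x * y = 0)
    (h2 : -d1 * y + e1 * c1 * x * y - c2 * y * z = 0)
    (h3 : -d2 * z + e2 * c2 * y * z = 0) :
    z = 0 := by
  by_contra hz0
  have hc2z : 0 < c2 * z := mul_pos hc2 (lt_of_le_of_ne hz (Ne.symm hz0))
  have hprey : e2 * c2 * y = d2 := by
    have : z * (e2 * c2 * y - d2) = 0 := by linear_combination h3
    linarith [(mul_eq_zero.1 this).resolve_left hz0]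
  have hy0 : y ≠ 0 := by rintro rfl; exact hd2 (by simpa using hprey.symm)
  have hpred : e1 * c1 * x = d1 + c2 * z := by
    have : y * (e1 * c1 * x - d1 - c2 * z) = 0 := by linear_combination h2
    linarith [(mul_eq_zero.1 this).resolve_left hy0]
  have hx0 : x ≠ 0 := by rintro rfl; linarith
  have hlog : r * (1 - x / K) = c1 * y := by
    have : x * (r * (1 - x / K) - c1 * y) = 0 := by linear_combination h1
    linarith [(mul_eq_zero.1 this).resolve_left hx0]
  have hcase_eq : e1 * c1 * K * (1 - c1 * d2 / (e2 * c2 * r)) = e1 * c1 * x := by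
    rw [← hprey]
    field_simp at hlog ⊢
    linear_combination e1 * c1 * hlog
  linarith

theorem plankton_fish_equilibria_case2_general
    (r K d1 d2 c1 c2 e1 e2 x0 y0 : ℝ)
    (hr : 0 < r) (hK : 0 < K) (hd1 : 0 < d1) (hd2 : 0 < d2)
    (hc1 : 0 < c1) (hc2 : 0 < c2) (he1 : 0 < e1) (he2 : 0 < e2)
    (hx0 : x0 = d1 / (e1 * c1))
    (hy0 : y0 = r / c1 * (1 - d1 / (e1 * c1 * K)))
    (hcase1 : e1 * c1 * K * (1 - c1 * d2 / (e2 * c2 * r)) ≤ d1)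
    (xb yb zb : ℝ) (hz : 0 ≤ zb) :
    (r * xb * (1 - xb / K) - c1 * xb * yb = 0 ∧
     -d1 * yb + e1 * c1 * xb * yb - c2 * yb * zb = 0 ∧
     -d2 * zb + e2 * c2 * yb * zb = 0)
    ↔ (xb, yb, zb) ∈ ({((0:ℝ), (0:ℝ), (0:ℝ)), (K, 0, 0), (x0, y0, 0)} : Set (ℝ × ℝ × ℝ)) := by
  have hplankton := logistic_predator_prey_equilibrium_iff (x := xb) (y := yb)
    hr.ne' hK.ne' hd1.ne' hc1.ne' he1.ne'
  subst hx0 hy0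
  simp only [Set.mem_insert_iff, Set.mem_singleton_iff, Prod.mk.injEq]
  constructor
  · rintro ⟨h1, h2, h3⟩
    obtain rfl := fish_eq_zero_of_equilibrium hr.ne' hK.ne' hd1.le hd2.ne' hc2 he2.ne' hcase1 hz
      h1 h2 h3
    have := hplankton.1 ⟨h1, by simpa using h2⟩
    tauto
  · rintro (⟨hx, hy, rfl⟩ | ⟨hx, hy, rfl⟩ | ⟨hx, hy, rfl⟩) <;>
      obtain ⟨h1, h2⟩ := hplankton.2 (by tauto) <;>
      exact ⟨h1, by simpa using h2, by ring⟩

/-- Classification of nonnegative equilibria of the plankton–fish system (1), case 2: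
if `e1 c1 K (1 - c1 d2/(e2 c2 r)) ≤ d1 < e1 c1 K` then the nonnegative equilibria are
exactly `(0,0,0)`, `(K,0,0)` and `(x0, y0, 0)`. -/
theorem plankton_fish_equilibria_case2
    (r K d1 d2 c1 c2 e1 e2 x0 y0 : ℝ)
    (hr : 0 < r) (hK : 0 < K) (hd1 : 0 < d1) (hd2 : 0 < d2)
    (hc1 : 0 < c1) (hc2 : 0 < c2) (he1 : 0 < e1) (he2 : 0 < e2)
    (hx0 : x0 = d1 / (e1 * c1))
    (hy0 : y0 = r / c1 * (1 - d1 / (e1 * c1 * K)))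
    (hcase1 : e1 * c1 * K * (1 - c1 * d2 / (e2 * c2 * r)) ≤ d1)
    (hcase2 : d1 < e1 * c1 * K)
    (xb yb zb : ℝ) (hx : 0 ≤ xb) (hy : 0 ≤ yb) (hz : 0 ≤ zb) :
    (r * xb * (1 - xb / K) - c1 * xb * yb = 0 ∧
     -d1 * yb + e1 * c1 * xb * yb - c2 * yb * zb = 0 ∧
     -d2 * zb + e2 * c2 * yb * zb = 0)
    ↔ (xb, yb, zb) ∈ ({((0:ℝ), (0:ℝ), (0:ℝ)), (K, 0, 0), (x0, y0, 0)} : Set (ℝ × ℝ × ℝ)) :=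
  plankton_fish_equilibria_case2_general r K d1 d2 c1 c2 e1 e2 x0 y0 hr hK hd1 hd2 hc1 hc2 he1 he2
    hx0 hy0 hcase1 xb yb zb hz
end

section
/- Let d > 0, τ ≥ 0 and 0 ≤ a < d be real numbers. Then for every λ ∈ ℂ with Re λ ≥ 0 one has λ + d - a·exp(-λ·τ) ≠ 0, i.e. all roots of the quasi-polynomial Q2(λ) = λ + d - a·e^{-λτ} lie in the open left half-plane. -/
namespace Complex

theorem le_norm_add_ofReal {z : ℂ} (hz : 0 ≤ z.re) (d : ℝ) : d ≤ ‖z + d‖ :=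
  calc d ≤ (z + d).re := by simpa using hz
    _ ≤ ‖z + d‖ := re_le_norm _

theorem add_ofReal_sub_ne_zero_of_norm_lt {z w : ℂ} {d : ℝ} (hz : 0 ≤ z.re) (hw : ‖w‖ < d) :
    z + d - w ≠ 0 := by
  intro h
  have hzw : z + d = w := sub_eq_zero.mp h
  linarith [le_norm_add_ofReal hz d, hzw ▸ hw]

theorem norm_exp_neg_mul_ofReal_le_one {z : ℂ} {τ : ℝ} (hz : 0 ≤ z.re) (hτ : 0 ≤ τ) :
    ‖exp (-z * τ)‖ ≤ 1 := by
  rw [norm_exp, Real.exp_le_one_iff]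
  simpa using mul_nonneg hz hτ

end Complex

theorem quasiPolynomial_roots_left_halfplane_general
    (d τ a : ℝ) (hτ : 0 ≤ τ) (ha : 0 ≤ a) (had : a < d) :
    ∀ lam : ℂ, 0 ≤ lam.re →
      lam + (d : ℂ) - (a : ℂ) * Complex.exp (-lam * (τ : ℂ)) ≠ 0 := by
  intro lam hre
  refine Complex.add_ofReal_sub_ne_zero_of_norm_lt hre ?_
  calc ‖(a : ℂ) * Complex.exp (-lam * τ)‖ = a * ‖Complex.exp (-lam * τ)‖ := by
        rw [norm_mul, Complex.norm_real, Real.norm_of_nonneg ha]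
    _ ≤ a * 1 := by gcongr; exact Complex.norm_exp_neg_mul_ofReal_le_one hre hτ
    _ < d := by rwa [mul_one]

/-- If `0 ≤ a < d` and `τ ≥ 0`, all roots of the quasi-polynomial
`Q2(λ) = λ + d - a e^{-λτ}` lie in the open left half-plane. -/
theorem quasiPolynomial_roots_left_halfplane
    (d τ a : ℝ) (hd : 0 < d) (hτ : 0 ≤ τ) (ha : 0 ≤ a) (had : a < d) :
    ∀ lam : ℂ, 0 ≤ lam.re →
      lam + (d : ℂ) - (a : ℂ) * Complex.exp (-lam * (τ : ℂ)) ≠ 0 :=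
  quasiPolynomial_roots_left_halfplane_general d τ a hτ ha had
end

section
/- Let p > 0, d > 0, τ ≥ 0 and c be real numbers with 0 < c < 2p. Then for every λ ∈ ℂ with Re λ ≥ 0 one has Q3(λ) = λ + d - d·e^{-λτ}·(1 - c/(λ + p)) ≠ 0; i.e. all roots of the quasi-polynomial Q3 lie in the open left half-plane. (Note that λ + p ≠ 0 whenever Re λ ≥ 0, so Q3(λ) is well defined there.) -/
/-! On `Re λ ≥ 0` the factor `1 - c/(λ + p)` has modulus `< 1` (as `λ + p` is closer to `0` than
to `c` exactly when `c < 2 Re(λ + p)`) and `e^{-λτ}` has modulus `≤ 1`, so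
`|d e^{-λτ} (1 - c/(λ + p))| < d ≤ Re(λ + d) ≤ |λ + d|`. -/

open Complex

theorem Complex.norm_sub_ofReal_lt_norm {z : ℂ} {c : ℝ} (hc : 0 < c) (hz : c < 2 * z.re) :
    ‖z - c‖ < ‖z‖ := by
  have hnormSq : normSq (z - c) < normSq z := by
    simp only [normSq_apply, sub_re, sub_im, ofReal_re, ofReal_im, sub_zero]
    nlinarith
  rw [← sq_lt_sq₀ (norm_nonneg _) (norm_nonneg _), ← normSq_eq_norm_sq, ← normSq_eq_norm_sq]
  exact hnormSq

theorem Complex.norm_one_sub_ofReal_div_lt_one {z : ℂ} {c : ℝ} (hc : 0 < c)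
    (hz : c < 2 * z.re) : ‖1 - c / z‖ < 1 := by
  have hz0 : z ≠ 0 := by
    rintro rfl
    simp only [zero_re, mul_zero] at hz
    linarith
  rw [one_sub_div hz0, norm_div, div_lt_one (norm_pos_iff.mpr hz0)]
  exact norm_sub_ofReal_lt_norm hc hz

theorem Complex.norm_exp_neg_mul_ofReal_le_one_s6 {z : ℂ} {τ : ℝ} (hz : 0 ≤ z.re) (hτ : 0 ≤ τ) :
    ‖exp (-z * τ)‖ ≤ 1 := by
  rw [norm_exp, Real.exp_le_one_iff, neg_mul, neg_re, re_mul_ofReal, neg_nonpos]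
  exact mul_nonneg hz hτ

theorem Complex.add_ofReal_sub_mul_ne_zero {z w : ℂ} {d : ℝ} (hd : 0 < d) (hz : 0 ≤ z.re)
    (hw : ‖w‖ < 1) : z + d - d * w ≠ 0 := by
  intro h
  have hdw : ‖(d : ℂ) * w‖ < d := by
    rw [norm_mul, norm_real, Real.norm_of_nonneg hd.le]
    exact mul_lt_of_lt_one_right hd hw
  have hzd : d ≤ ‖z + d‖ :=
    calc d ≤ (z + d).re := by simp only [add_re, ofReal_re]; linarith
      _ ≤ ‖z + d‖ := re_le_norm _
  rw [sub_eq_zero.mp h] at hzd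
  linarith

theorem quasiPolynomial_Q3_roots_left_halfplane_general
    (p d τ c : ℝ) (hd : 0 < d) (hτ : 0 ≤ τ)
    (hc0 : 0 < c) (hc2 : c < 2 * p) :
    ∀ lam : ℂ, 0 ≤ lam.re →
      lam + (d : ℂ) - (d : ℂ) * Complex.exp (-lam * (τ : ℂ)) *
        (1 - (c : ℂ) / (lam + (p : ℂ))) ≠ 0 := by
  intro lam hlam
  have hfactor : ‖1 - (c : ℂ) / (lam + p)‖ < 1 :=
    norm_one_sub_ofReal_div_lt_one hc0 (by simp only [add_re, ofReal_re]; linarith)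
  rw [mul_assoc]
  refine add_ofReal_sub_mul_ne_zero hd hlam ?_
  rw [norm_mul]
  exact mul_lt_one_of_nonneg_of_lt_one_right (norm_exp_neg_mul_ofReal_le_one_s6 hlam hτ)
    (norm_nonneg _) hfactor

/-- If `p > 0`, `d > 0`, `τ ≥ 0` and `0 < c < 2p`, then all roots of the quasi-polynomial
`Q3(λ) = λ + d - d e^{-λτ} (1 - c/(λ + p))` lie in the open left half-plane. -/
theorem quasiPolynomial_Q3_roots_left_halfplane
    (p d τ c : ℝ) (hp : 0 < p) (hd : 0 < d) (hτ : 0 ≤ τ)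
    (hc0 : 0 < c) (hc2 : c < 2 * p) :
    ∀ lam : ℂ, 0 ≤ lam.re →
      lam + (d : ℂ) - (d : ℂ) * Complex.exp (-lam * (τ : ℂ)) *
        (1 - (c : ℂ) / (lam + (p : ℂ))) ≠ 0 :=
  quasiPolynomial_Q3_roots_left_halfplane_general p d τ c hd hτ hc0 hc2
end

section
/- (Lemma, part 2, characteristic-root form.) Let r, K, d1, d2, c1, c2, e1, e2 > 0 and τ1, τ2 ≥ 0 satisfy d1 < e1·c1·K·(1 - c1·d2/(e2·c2·r)), and set x0 = d1/(e1·c1), y0 = (r/c1)·(1 - d1/(e1·c1·K)). Then there exists λ ∈ ℂ with Re λ > 0 such that Q(λ) = Q1(λ)·Q2(λ) = 0, where Q1(λ) = (λ + (r/K)·x0)·(λ + d1 - d1·e^{-λτ1}) + c1·d1·y0·e^{-λτ1} and Q2(λ) = λ + d2 - e2·c2·y0·e^{-λτ2}; i.e. the characteristic quasi-polynomial of the linearization of system (1) at (x0, y0, 0) has a root in the open right half-plane. -/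
/-! The factor `Q₂` alone already has a positive real root. On `[0, ∞)` the real function
`t ↦ t + d₂ - e₂ c₂ y₀ e^{-t τ₂}` is negative at `0` exactly when `d₂ < e₂ c₂ y₀`, which is what
the hypothesis on `d₁` says after rearranging, and it is nonnegative at `t = e₂ c₂ y₀ - d₂` because
`e^{-t τ₂} ≤ 1`; the intermediate value theorem gives the root. -/

open Real

theorem exists_pos_root_add_sub_mul_exp {a b τ : ℝ} (hτ : 0 ≤ τ) (ha : 0 ≤ a) (hba : b < a) :
    ∃ t : ℝ, 0 < t ∧ t + b - a * exp (-t * τ) = 0 := by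
  set f : ℝ → ℝ := fun t => t + b - a * exp (-t * τ)
  have hf_zero : f 0 < 0 := by simp [f, hba]
  have hf_end : 0 ≤ f (a - b) := by
    have hexp : exp (-(a - b) * τ) ≤ 1 := exp_le_one_iff.mpr (by nlinarith)
    show 0 ≤ (a - b) + b - a * exp (-(a - b) * τ)
    nlinarith
  have hcont : ContinuousOn f (Set.Icc 0 (a - b)) := by fun_prop
  obtain ⟨t, ht, hft⟩ :=
    intermediate_value_Icc (sub_nonneg.mpr hba.le) hcont ⟨hf_zero.le, hf_end⟩
  refine ⟨t, lt_of_le_of_ne ht.1 ?_, hft⟩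
  rintro rfl
  exact hf_zero.ne hft

theorem exists_re_pos_root_add_sub_mul_cexp {a b τ : ℝ} (hτ : 0 ≤ τ) (ha : 0 ≤ a)
    (hba : b < a) :
    ∃ lam : ℂ, 0 < lam.re ∧ lam + (b : ℂ) - (a : ℂ) * Complex.exp (-lam * (τ : ℂ)) = 0 := by
  obtain ⟨t, ht, hroot⟩ := exists_pos_root_add_sub_mul_exp hτ ha hba
  refine ⟨t, by simpa using ht, ?_⟩
  exact_mod_cast congrArg ((↑) : ℝ → ℂ) hroot

theorem lt_mul_mul_of_lt_mul_one_sub_div {r K d1 d2 c1 c2 e1 e2 : ℝ}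
    (hr : 0 < r) (hK : 0 < K) (hc1 : 0 < c1) (hc2 : 0 < c2) (he1 : 0 < e1) (he2 : 0 < e2)
    (h : d1 < e1 * c1 * K * (1 - c1 * d2 / (e2 * c2 * r))) :
    d2 < e2 * c2 * (r / c1 * (1 - d1 / (e1 * c1 * K))) := by
  have h' : d1 / (e1 * c1 * K) < 1 - c1 * d2 / (e2 * c2 * r) := by
    rwa [div_lt_iff₀ (by positivity), mul_comm]
  calc d2 = e2 * c2 * (r / c1 * (c1 * d2 / (e2 * c2 * r))) := by field_simp
    _ < e2 * c2 * (r / c1 * (1 - d1 / (e1 * c1 * K))) := by gcongr; linarith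

theorem charPoly_root_right_halfplane_general
    (r K d1 d2 c1 c2 e1 e2 τ1 τ2 x0 y0 : ℝ)
    (hr : 0 < r) (hK : 0 < K) (hd2 : 0 < d2)
    (hc1 : 0 < c1) (hc2 : 0 < c2) (he1 : 0 < e1) (he2 : 0 < e2)
    (hτ2 : 0 ≤ τ2)
    (hy0 : y0 = r / c1 * (1 - d1 / (e1 * c1 * K)))
    (hcase : d1 < e1 * c1 * K * (1 - c1 * d2 / (e2 * c2 * r))) :
    ∃ lam : ℂ, 0 < lam.re ∧
      ((lam + ((r / K * x0 : ℝ) : ℂ)) *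
          (lam + (d1 : ℂ) - (d1 : ℂ) * Complex.exp (-lam * (τ1 : ℂ)))
        + ((c1 * d1 * y0 : ℝ) : ℂ) * Complex.exp (-lam * (τ1 : ℂ))) *
      (lam + (d2 : ℂ) - ((e2 * c2 * y0 : ℝ) : ℂ) * Complex.exp (-lam * (τ2 : ℂ))) = 0 := by
  have hd2_lt : d2 < e2 * c2 * y0 :=
    hy0 ▸ lt_mul_mul_of_lt_mul_one_sub_div hr hK hc1 hc2 he1 he2 hcase
  obtain ⟨lam, hre, hQ2⟩ :=
    exists_re_pos_root_add_sub_mul_cexp hτ2 (hd2.trans hd2_lt).le hd2_lt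
  exact ⟨lam, hre, by rw [hQ2, mul_zero]⟩

/-- Lemma, part 2 (characteristic-root form): under condition (13),
the characteristic quasi-polynomial `Q = Q1 ⬝ Q2` of the linearization of system (1)
at `(x0, y0, 0)` has a root in the open right half-plane. -/
theorem charPoly_root_right_halfplane
    (r K d1 d2 c1 c2 e1 e2 τ1 τ2 x0 y0 : ℝ)
    (hr : 0 < r) (hK : 0 < K) (hd1 : 0 < d1) (hd2 : 0 < d2)
    (hc1 : 0 < c1) (hc2 : 0 < c2) (he1 : 0 < e1) (he2 : 0 < e2)
    (hτ1 : 0 ≤ τ1) (hτ2 : 0 ≤ τ2)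
    (hx0 : x0 = d1 / (e1 * c1))
    (hy0 : y0 = r / c1 * (1 - d1 / (e1 * c1 * K)))
    (hcase : d1 < e1 * c1 * K * (1 - c1 * d2 / (e2 * c2 * r))) :
    ∃ lam : ℂ, 0 < lam.re ∧
      ((lam + ((r / K * x0 : ℝ) : ℂ)) *
          (lam + (d1 : ℂ) - (d1 : ℂ) * Complex.exp (-lam * (τ1 : ℂ)))
        + ((c1 * d1 * y0 : ℝ) : ℂ) * Complex.exp (-lam * (τ1 : ℂ))) *
      (lam + (d2 : ℂ) - ((e2 * c2 * y0 : ℝ) : ℂ) * Complex.exp (-lam * (τ2 : ℂ))) = 0 :=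
  charPoly_root_right_halfplane_general r K d1 d2 c1 c2 e1 e2 τ1 τ2 x0 y0 hr hK hd2 hc1 hc2 he1 he2
    hτ2 hy0 hcase
end

section
/- Positive definiteness of the matrix L: let r, K, d1, d2, c1, c2, e1, e2 > 0, τ1, τ2 ≥ 0, x0 = d1/(e1·c1), y0 = (r/c1)·(1 - d1/(e1·c1·K)), and write p = (r/K)·x0. Assume 0 < c1·y0 < 2p and 0 < e2·c2·y0 < d2, let α > 0, let m1 > 0 satisfy p²·e^{-m1·τ1} > (p - c1·y0)² and (p² + d1²)·e^{-m1·τ1} > d1², and let m2 > 0 satisfy e2·c2·y0·e^{m2·τ2/2} < d2. Define l22 = α·((p² + d1²)·e^{-m1·τ1} - d1²), l11 = ((e1/d1)·p)²·l22 + α·e1²·(p²·e^{-m1·τ1} - (p - c1·y0)²), l12 = (e1/d1)·p·l22, l13 = α·c2·y0·(e1/d1)·p²·e^{-m1·τ1}, l23 = α·c2·y0·(p + d1)·e^{-m1·τ1}, and let h33 > 0 satisfy 2·h33·(d2 - e2·c2·y0·e^{m2·τ2/2}) > (l11·l23² + l22·l13² - 2·l12·l13·l23)/(l11·l22 - l12²),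 with l33 = 2·h33·(d2 - e2·c2·y0·e^{m2·τ2/2}). Then the symmetric 3×3 matrix L = [[l11, l12, l13], [l12, l22, l23], [l13, l23, l33]] is positive definite; in particular l11 > 0, l11·l22 - l12² > 0 and det L > 0. -/
/-! Sylvester's criterion in dimension three: for `M = !![a, b, c; b, d, e; c, e, f]` with
leading principal minors `a, D₂, D₃`, completing the square gives
`a D₂ · vᵀ M v = D₂ (a x + b y + c z)² + (D₂ y + (a e - b c) z)² + a D₃ z²` for `v = (x, y, z)`.
For `L` the minors are explicit: `l11 = k² l22 + A` and `l12 = k l22` with `k = e1 p / d1` and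
`A = α e1² (p² e^(-m1 τ1) - (p - c1 y0)²)` give `D₂ = A l22`,
and `D₃ = l33 D₂ - (l11 l23² + l22 l13² - 2 l12 l13 l23)`, so the condition on `h33` says
exactly `D₃ > 0`. -/

open Matrix

namespace Matrix

section CommRing

variable {R : Type*} [CommRing R] (a b c d e f : R)

theorem det_fin_three_symm :
    det !![a, b, c; b, d, e; c, e, f] =
      f * (a * d - b ^ 2) - (a * e ^ 2 + d * c ^ 2 - 2 * b * c * e) := by
  rw [det_fin_three]
  simp only [of_apply, cons_val', cons_val_zero, cons_val_fin_one, cons_val_one, cons_val]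
  ring

theorem dotProduct_mulVec_fin_three_symm (v : Fin 3 → R) :
    v ⬝ᵥ (!![a, b, c; b, d, e; c, e, f] *ᵥ v) =
      a * v 0 ^ 2 + 2 * b * v 0 * v 1 + 2 * c * v 0 * v 2 + d * v 1 ^ 2 + 2 * e * v 1 * v 2
        + f * v 2 ^ 2 := by
  simp only [dotProduct, cons_mulVec, Fin.sum_univ_three, cons_val_zero, cons_val_one, cons_val,
    empty_mulVec]
  ring

end CommRing

section OrderedField

variable {𝕜 : Type*} [Field 𝕜] [LinearOrder 𝕜] [IsStrictOrderedRing 𝕜] {a b c d e f : 𝕜}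

theorem quadForm_fin_three_pos (h₁ : 0 < a) (h₂ : 0 < a * d - b ^ 2)
    (h₃ : 0 < f * (a * d - b ^ 2) - (a * e ^ 2 + d * c ^ 2 - 2 * b * c * e))
    {x y z : 𝕜} (hxyz : x ≠ 0 ∨ y ≠ 0 ∨ z ≠ 0) :
    0 < a * x ^ 2 + 2 * b * x * y + 2 * c * x * z + d * y ^ 2 + 2 * e * y * z + f * z ^ 2 := by
  set D₂ := a * d - b ^ 2
  set D₃ := f * D₂ - (a * e ^ 2 + d * c ^ 2 - 2 * b * c * e)
  have hsq : a * D₂ *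
      (a * x ^ 2 + 2 * b * x * y + 2 * c * x * z + d * y ^ 2 + 2 * e * y * z + f * z ^ 2) =
      D₂ * (a * x + b * y + c * z) ^ 2 + (D₂ * y + (a * e - b * c) * z) ^ 2
        + a * D₃ * z ^ 2 := by
    simp only [D₂, D₃]; ring
  refine pos_of_mul_pos_right (hsq ▸ ?_) (mul_pos h₁ h₂).le
  rcases eq_or_ne z 0 with rfl | hz
  · rcases eq_or_ne y 0 with rfl | hy
    · have hx : x ≠ 0 := by simpa using hxyz
      simpa using mul_pos h₂ (sq_pos_of_ne_zero (mul_ne_zero h₁.ne' hx))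
    · have := sq_pos_of_ne_zero (mul_ne_zero h₂.ne' hy)
      simp only [mul_zero, add_zero, ne_eq, OfNat.ofNat_ne_zero, not_false_eq_true, zero_pow]
      positivity
  · have := mul_pos (mul_pos h₁ h₃) (sq_pos_of_ne_zero hz)
    positivity

theorem posDef_fin_three_of_minors [StarRing 𝕜] [TrivialStar 𝕜] (h₁ : 0 < a)
    (h₂ : 0 < a * d - b ^ 2) (h₃ : 0 < det !![a, b, c; b, d, e; c, e, f]) :
    PosDef !![a, b, c; b, d, e; c, e, f] := by
  refine posDef_iff_dotProduct_mulVec.2 ⟨?_, fun v hv ↦ ?_⟩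
  · exact IsHermitian.ext fun i j ↦ by fin_cases i <;> fin_cases j <;> exact star_trivial _
  · have hv' : v 0 ≠ 0 ∨ v 1 ≠ 0 ∨ v 2 ≠ 0 := by
      contrapose! hv
      ext i; fin_cases i <;> simp [hv]
    rw [star_trivial, dotProduct_mulVec_fin_three_symm]
    exact quadForm_fin_three_pos h₁ h₂ (det_fin_three_symm a b c d e f ▸ h₃) hv'

end OrderedField

end Matrix

theorem matrixL_posDef_general
    (d1 d2 c1 c2 e1 e2 τ1 τ2 y0 p α m1 m2
      l11 l12 l13 l22 l23 l33 h33 : ℝ)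
    (he1 : 0 < e1)
    (hα : 0 < α)
    (hm1a : (p - c1 * y0) ^ 2 < p ^ 2 * Real.exp (-m1 * τ1))
    (hm1b : d1 ^ 2 < (p ^ 2 + d1 ^ 2) * Real.exp (-m1 * τ1))
    (hl22 : l22 = α * ((p ^ 2 + d1 ^ 2) * Real.exp (-m1 * τ1) - d1 ^ 2))
    (hl11 : l11 = (e1 / d1 * p) ^ 2 * l22
        + α * e1 ^ 2 * (p ^ 2 * Real.exp (-m1 * τ1) - (p - c1 * y0) ^ 2))
    (hl12 : l12 = e1 / d1 * p * l22)
    (hh33ineq : (l11 * l23 ^ 2 + l22 * l13 ^ 2 - 2 * l12 * l13 * l23) / (l11 * l22 - l12 ^ 2)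
        < 2 * h33 * (d2 - e2 * c2 * y0 * Real.exp (m2 * τ2 / 2)))
    (hl33 : l33 = 2 * h33 * (d2 - e2 * c2 * y0 * Real.exp (m2 * τ2 / 2))) :
    (!![l11, l12, l13; l12, l22, l23; l13, l23, l33] : Matrix (Fin 3) (Fin 3) ℝ).PosDef ∧
      0 < l11 ∧ 0 < l11 * l22 - l12 ^ 2 ∧
      0 < (!![l11, l12, l13; l12, l22, l23; l13, l23, l33] : Matrix (Fin 3) (Fin 3) ℝ).det := by
  set A := α * e1 ^ 2 * (p ^ 2 * Real.exp (-m1 * τ1) - (p - c1 * y0) ^ 2)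
  have hl22_pos : 0 < l22 := hl22 ▸ mul_pos hα (sub_pos.2 hm1b)
  have hA : 0 < A := mul_pos (by positivity) (sub_pos.2 hm1a)
  have h₁ : 0 < l11 := by rw [hl11]; positivity
  have h₂ : 0 < l11 * l22 - l12 ^ 2 := by
    have hschur : l11 * l22 - l12 ^ 2 = A * l22 := by rw [hl11, hl12]; ring
    exact hschur ▸ mul_pos hA hl22_pos
  have h₃ :
      0 < (!![l11, l12, l13; l12, l22, l23; l13, l23, l33] : Matrix (Fin 3) (Fin 3) ℝ).det := by
    rw [det_fin_three_symm, sub_pos, hl33]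
    exact (div_lt_iff₀ h₂).1 hh33ineq
  exact ⟨posDef_fin_three_of_minors h₁ h₂ h₃, h₁, h₂, h₃⟩

/-- Positive definiteness of the matrix `L` (formulae (28), (35)) in the
Lyapunov–Krasovskii construction for the plankton–fish system. -/
theorem matrixL_posDef
    (r K d1 d2 c1 c2 e1 e2 τ1 τ2 x0 y0 p α m1 m2
      l11 l12 l13 l22 l23 l33 h33 : ℝ)
    (hr : 0 < r) (hK : 0 < K) (hd1 : 0 < d1) (hd2 : 0 < d2)
    (hc1 : 0 < c1) (hc2 : 0 < c2) (he1 : 0 < e1) (he2 : 0 < e2)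
    (hτ1 : 0 ≤ τ1) (hτ2 : 0 ≤ τ2)
    (hx0 : x0 = d1 / (e1 * c1))
    (hy0 : y0 = r / c1 * (1 - d1 / (e1 * c1 * K)))
    (hp : p = r / K * x0)
    (hstab1 : 0 < c1 * y0) (hstab1' : c1 * y0 < 2 * p)
    (hstab2 : 0 < e2 * c2 * y0) (hstab2' : e2 * c2 * y0 < d2)
    (hα : 0 < α)
    (hm1 : 0 < m1)
    (hm1a : (p - c1 * y0) ^ 2 < p ^ 2 * Real.exp (-m1 * τ1))
    (hm1b : d1 ^ 2 < (p ^ 2 + d1 ^ 2) * Real.exp (-m1 * τ1))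
    (hm2 : 0 < m2)
    (hm2a : e2 * c2 * y0 * Real.exp (m2 * τ2 / 2) < d2)
    (hl22 : l22 = α * ((p ^ 2 + d1 ^ 2) * Real.exp (-m1 * τ1) - d1 ^ 2))
    (hl11 : l11 = (e1 / d1 * p) ^ 2 * l22
        + α * e1 ^ 2 * (p ^ 2 * Real.exp (-m1 * τ1) - (p - c1 * y0) ^ 2))
    (hl12 : l12 = e1 / d1 * p * l22)
    (hl13 : l13 = α * c2 * y0 * (e1 / d1) * p ^ 2 * Real.exp (-m1 * τ1))
    (hl23 : l23 = α * c2 * y0 * (p + d1) * Real.exp (-m1 * τ1))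
    (hh33 : 0 < h33)
    (hh33ineq : (l11 * l23 ^ 2 + l22 * l13 ^ 2 - 2 * l12 * l13 * l23) / (l11 * l22 - l12 ^ 2)
        < 2 * h33 * (d2 - e2 * c2 * y0 * Real.exp (m2 * τ2 / 2)))
    (hl33 : l33 = 2 * h33 * (d2 - e2 * c2 * y0 * Real.exp (m2 * τ2 / 2))) :
    (!![l11, l12, l13; l12, l22, l23; l13, l23, l33] : Matrix (Fin 3) (Fin 3) ℝ).PosDef ∧
      0 < l11 ∧ 0 < l11 * l22 - l12 ^ 2 ∧
      0 < (!![l11, l12, l13; l12, l22, l23; l13, l23, l33] : Matrix (Fin 3) (Fin 3) ℝ).det :=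
  matrixL_posDef_general d1 d2 c1 c2 e1 e2 τ1 τ2 y0 p α m1 m2 l11 l12 l13 l22 l23 l33 h33 he1 hα
    hm1a hm1b hl22 hl11 hl12 hh33ineq hl33
end

section
/- Positive definiteness of the matrix H: let r, K, d1, d2, c1, c2, e1, e2 > 0, τ1, τ2 ≥ 0, x0 = d1/(e1·c1), y0 = (r/c1)·(1 - d1/(e1·c1·K)), and write p = (r/K)·x0. Assume 0 < c1·y0 < 2p and 0 < e2·c2·y0 < d2, let α > 0, let m1 > 0 satisfy p²·e^{-m1·τ1} > (p - c1·y0)² and (p² + d1²)·e^{-m1·τ1} > d1², let m2 > 0 satisfy e2·c2·y0·e^{m2·τ2/2} < d2, and define l22 = α·((p² + d1²)·e^{-m1·τ1} - d1²), l11 = ((e1/d1)p)²·l22 + α·e1²·(p²e^{-m1τ1} - (p - c1 y0)²), l12 = (e1/d1)·p·l22, l13 = α·c2·y0·(e1/d1)·p²·e^{-m1τ1}, l23 = α·c2·y0·(p + d1)·e^{-m1τ1}. Set h22 = α·(p + d1)·e^{-m1·τ1}, h12 = α·(e1/d1)·p²·e^{-m1·τ1}, h11 = (e1/d1)²·(p·l22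 + α·c1·y0·d1²), and let h33 > 0 satisfy 2·h33·(d2 - e2·c2·y0·e^{m2·τ2/2}) > (l11·l23² + l22·l13² - 2·l12·l13·l23)/(l11·l22 - l12²). Then the symmetric matrix H = [[h11, h12, 0], [h12, h22, 0], [0, 0, h33]] is positive definite; in particular h11 > 0, h22 > 0 and h11·h22 - h12² > 0. -/
/-!
`H` is block diagonal, so it is positive definite as soon as its `2 × 2` block is, i.e.
`h11 > 0` and `h11 h22 - h12² > 0`, and `h33 > 0`. With `E = exp (-m1 τ1)` and `q = c1 y0`,
the determinant factors as `(e1/d1)² α² E · (p d1 E (p² + p d1 + d1²) - (p - q) d1² (p + d1))`;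
the bracket is positive by squaring, using `(p - q)² < p² E` and
`d1² (p + d1)² < E (p² + p d1 + d1²)²`, the latter from `d1² < (p² + d1²) E` and
`(p + d1)² (p² + d1²) ≤ (p² + p d1 + d1²)²`.
-/

open Matrix

theorem posDef_of_pos_of_det_pos_of_pos {a b c d : ℝ} (ha : 0 < a) (hdet : 0 < a * c - b ^ 2)
    (hd : 0 < d) : (!![a, b, 0; b, c, 0; 0, 0, d] : Matrix (Fin 3) (Fin 3) ℝ).PosDef := by
  refine posDef_iff_dotProduct_mulVec.mpr ⟨?_, fun x hx ↦ ?_⟩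
  · ext i j
    fin_cases i <;> fin_cases j <;> rfl
  have hquad : star x ⬝ᵥ (!![a, b, 0; b, c, 0; 0, 0, d] *ᵥ x) =
      a * x 0 ^ 2 + 2 * b * (x 0 * x 1) + c * x 1 ^ 2 + d * x 2 ^ 2 := by
    simp [dotProduct, mulVec, Fin.sum_univ_three]
    ring
  have hsq : a * (star x ⬝ᵥ (!![a, b, 0; b, c, 0; 0, 0, d] *ᵥ x)) =
      (a * x 0 + b * x 1) ^ 2 + (a * c - b ^ 2) * x 1 ^ 2 + a * d * x 2 ^ 2 := by
    rw [hquad]; ring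
  refine pos_of_mul_pos_right (hsq ▸ ?_) ha.le
  by_cases h1 : x 1 = 0
  · by_cases h2 : x 2 = 0
    · have h0 : x 0 ≠ 0 := fun h0 ↦ hx (by ext i; fin_cases i <;> simp [h0, h1, h2])
      simp only [h1, h2, mul_zero, add_zero, ne_eq, OfNat.ofNat_ne_zero, not_false_eq_true,
        zero_pow]
      positivity
    · have : 0 < a * d * x 2 ^ 2 := by positivity
      positivity
  · have : 0 < (a * c - b ^ 2) * x 1 ^ 2 := by positivity
    positivity

theorem sub_mul_sq_mul_add_lt {p d q E : ℝ} (hp : 0 < p) (hd : 0 < d)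
    (hq : (p - q) ^ 2 < p ^ 2 * E) (hE : d ^ 2 < (p ^ 2 + d ^ 2) * E) :
    (p - q) * d ^ 2 * (p + d) < p * d * E * (p ^ 2 + p * d + d ^ 2) := by
  have hsum : d ^ 2 * (p + d) ^ 2 < E * (p ^ 2 + p * d + d ^ 2) ^ 2 := by
    have hcross : (p + d) ^ 2 * (p ^ 2 + d ^ 2) ≤ (p ^ 2 + p * d + d ^ 2) ^ 2 := by
      nlinarith [sq_nonneg (p * d)]
    refine lt_of_mul_lt_mul_right ?_ (by positivity : (0 : ℝ) ≤ p ^ 2 + d ^ 2)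
    calc d ^ 2 * (p + d) ^ 2 * (p ^ 2 + d ^ 2) ≤ d ^ 2 * (p ^ 2 + p * d + d ^ 2) ^ 2 := by
          rw [mul_assoc]; gcongr
      _ < (p ^ 2 + d ^ 2) * E * (p ^ 2 + p * d + d ^ 2) ^ 2 := by gcongr
      _ = E * (p ^ 2 + p * d + d ^ 2) ^ 2 * (p ^ 2 + d ^ 2) := by ring
  have hE0 : 0 < E := pos_of_mul_pos_right ((by positivity : (0 : ℝ) < d ^ 2).trans hE)
    (by positivity)
  refine lt_of_pow_lt_pow_left₀ 2 (by positivity) ?_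
  calc ((p - q) * d ^ 2 * (p + d)) ^ 2 = (p - q) ^ 2 * (d ^ 4 * (p + d) ^ 2) := by ring
    _ < p ^ 2 * E * (d ^ 4 * (p + d) ^ 2) := by gcongr
    _ = p ^ 2 * d ^ 2 * E * (d ^ 2 * (p + d) ^ 2) := by ring
    _ < p ^ 2 * d ^ 2 * E * (E * (p ^ 2 + p * d + d ^ 2) ^ 2) := by gcongr
    _ = (p * d * E * (p ^ 2 + p * d + d ^ 2)) ^ 2 := by ring

theorem matrixH_posDef_general
    (d1 c1 e1 τ1 y0 p α m1 l22 h11 h12 h22 h33 : ℝ)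
    (hd1 : 0 < d1) (he1 : 0 < e1)
    (hstab1 : 0 < c1 * y0) (hstab1' : c1 * y0 < 2 * p)
    (hα : 0 < α)
    (hm1a : (p - c1 * y0) ^ 2 < p ^ 2 * Real.exp (-m1 * τ1))
    (hm1b : d1 ^ 2 < (p ^ 2 + d1 ^ 2) * Real.exp (-m1 * τ1))
    (hl22 : l22 = α * ((p ^ 2 + d1 ^ 2) * Real.exp (-m1 * τ1) - d1 ^ 2))
    (hh22 : h22 = α * (p + d1) * Real.exp (-m1 * τ1))
    (hh12 : h12 = α * (e1 / d1) * p ^ 2 * Real.exp (-m1 * τ1))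
    (hh11 : h11 = (e1 / d1) ^ 2 * (p * l22 + α * (c1 * y0) * d1 ^ 2))
    (hh33 : 0 < h33) :
    (!![h11, h12, 0; h12, h22, 0; 0, 0, h33] : Matrix (Fin 3) (Fin 3) ℝ).PosDef ∧
      0 < h11 ∧ 0 < h22 ∧ 0 < h11 * h22 - h12 ^ 2 := by
  set E := Real.exp (-m1 * τ1)
  have hE : 0 < E := Real.exp_pos _
  have hp : 0 < p := by linarith
  have hl22pos : 0 < l22 := by rw [hl22]; nlinarith
  have hh11pos : 0 < h11 := by rw [hh11]; positivity
  have hh22pos : 0 < h22 := by rw [hh22]; positivity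
  have hdet : 0 < h11 * h22 - h12 ^ 2 := by
    have hfactor : h11 * h22 - h12 ^ 2 = (e1 / d1) ^ 2 * α ^ 2 * E *
        (p * d1 * E * (p ^ 2 + p * d1 + d1 ^ 2) - (p - c1 * y0) * d1 ^ 2 * (p + d1)) := by
      rw [hh11, hh22, hh12, hl22]; ring
    have hbracket := sub_pos.mpr (sub_mul_sq_mul_add_lt hp hd1 hm1a hm1b)
    rw [hfactor]
    positivity
  exact ⟨posDef_of_pos_of_det_pos_of_pos hh11pos hdet hh33, hh11pos, hh22pos, hdet⟩

/-- Positive definiteness of the matrix `H` (formulae (24), (31)–(33), (36)) in the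
Lyapunov–Krasovskii construction for the plankton–fish system. -/
theorem matrixH_posDef
    (r K d1 d2 c1 c2 e1 e2 τ1 τ2 x0 y0 p α m1 m2
      l11 l12 l13 l22 l23 h11 h12 h22 h33 : ℝ)
    (hr : 0 < r) (hK : 0 < K) (hd1 : 0 < d1) (hd2 : 0 < d2)
    (hc1 : 0 < c1) (hc2 : 0 < c2) (he1 : 0 < e1) (he2 : 0 < e2)
    (hτ1 : 0 ≤ τ1) (hτ2 : 0 ≤ τ2)
    (hx0 : x0 = d1 / (e1 * c1))
    (hy0 : y0 = r / c1 * (1 - d1 / (e1 * c1 * K)))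
    (hp : p = r / K * x0)
    (hstab1 : 0 < c1 * y0) (hstab1' : c1 * y0 < 2 * p)
    (hstab2 : 0 < e2 * c2 * y0) (hstab2' : e2 * c2 * y0 < d2)
    (hα : 0 < α)
    (hm1 : 0 < m1)
    (hm1a : (p - c1 * y0) ^ 2 < p ^ 2 * Real.exp (-m1 * τ1))
    (hm1b : d1 ^ 2 < (p ^ 2 + d1 ^ 2) * Real.exp (-m1 * τ1))
    (hm2 : 0 < m2)
    (hm2a : e2 * c2 * y0 * Real.exp (m2 * τ2 / 2) < d2)
    (hl22 : l22 = α * ((p ^ 2 + d1 ^ 2) * Real.exp (-m1 * τ1) - d1 ^ 2))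
    (hl11 : l11 = (e1 / d1 * p) ^ 2 * l22
        + α * e1 ^ 2 * (p ^ 2 * Real.exp (-m1 * τ1) - (p - c1 * y0) ^ 2))
    (hl12 : l12 = e1 / d1 * p * l22)
    (hl13 : l13 = α * c2 * y0 * (e1 / d1) * p ^ 2 * Real.exp (-m1 * τ1))
    (hl23 : l23 = α * c2 * y0 * (p + d1) * Real.exp (-m1 * τ1))
    (hh22 : h22 = α * (p + d1) * Real.exp (-m1 * τ1))
    (hh12 : h12 = α * (e1 / d1) * p ^ 2 * Real.exp (-m1 * τ1))
    (hh11 : h11 = (e1 / d1) ^ 2 * (p * l22 + α * (c1 * y0) * d1 ^ 2))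
    (hh33 : 0 < h33)
    (hh33ineq : (l11 * l23 ^ 2 + l22 * l13 ^ 2 - 2 * l12 * l13 * l23) / (l11 * l22 - l12 ^ 2)
        < 2 * h33 * (d2 - e2 * c2 * y0 * Real.exp (m2 * τ2 / 2))) :
    (!![h11, h12, 0; h12, h22, 0; 0, 0, h33] : Matrix (Fin 3) (Fin 3) ℝ).PosDef ∧
      0 < h11 ∧ 0 < h22 ∧ 0 < h11 * h22 - h12 ^ 2 :=
  matrixH_posDef_general d1 c1 e1 τ1 y0 p α m1 l22 h11 h12 h22 h33 hd1 he1 hstab1 hstab1' hα hm1a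
    hm1b hl22 hh22 hh12 hh11 hh33
end

section
/- Estimate for the delayed nonlinearity g1 (inequality (55)): let h11, h22 > 0 and h12 be reals with h11·h22 - h12² > 0, let μ1 > 0, m1 > 0, τ1 ≥ 0 and e1, c1 ≥ 0. Set H1 = [[h11, h12, 0], [h12, h22, 0], [0, 0, 0]] and, for v = (v1, v2, v3) ∈ ℝ³, G1(v) = (0, e1·c1·v1·v2, 0). Then for all u, v ∈ ℝ³: μ1·⟨H1·u, u⟩ - μ1·e^{-m1·τ1}·⟨H1·v, v⟩ + 2·⟨H1·u, G1(v)⟩ ≤ μ1·(1 + e^{m1·τ1}·(e1·c1/μ1)²·(h22²/(h11·h22 - h12²))·v2²)·⟨H1·u, u⟩. -/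
/-!
Only the upper-left `2 × 2` block `[[h11, h12], [h12, h22]]` of `H1` matters, and for its quadratic
form `Q` one has `h22 * Q x = (h12 x₀ + h22 x₁)² + (h11 h22 - h12²) x₀²`. Hence `(H1 u)₁² ≤ h22 Q u`
and `v₀² ≤ h22 / (h11 h22 - h12²) * Q v`. The cross term `2 (H1 u)₁ e1 c1 v₀ v₁` is split by the
weighted AM-GM inequality `2ab ≤ c a² + b² / c`, with the weight `c` chosen so that the `v₀²` part is
absorbed by the delayed term `μ1 e^{-m1 τ1} Q v`; the remaining part is the extra factor on `Q u`.
-/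

open Matrix

def binaryQuadForm (h11 h12 h22 x y : ℝ) : ℝ :=
  h11 * x ^ 2 + 2 * h12 * x * y + h22 * y ^ 2

namespace binaryQuadForm

variable (h11 h12 h22 x y : ℝ)

theorem mul_eq_sq_add :
    h22 * binaryQuadForm h11 h12 h22 x y =
      (h12 * x + h22 * y) ^ 2 + (h11 * h22 - h12 ^ 2) * x ^ 2 := by
  unfold binaryQuadForm; ring

theorem sq_le_mul (hdet : 0 ≤ h11 * h22 - h12 ^ 2) :
    (h12 * x + h22 * y) ^ 2 ≤ h22 * binaryQuadForm h11 h12 h22 x y := by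
  rw [mul_eq_sq_add]
  nlinarith [sq_nonneg x]

theorem det_mul_sq_le :
    (h11 * h22 - h12 ^ 2) * x ^ 2 ≤ h22 * binaryQuadForm h11 h12 h22 x y := by
  rw [mul_eq_sq_add]
  nlinarith [sq_nonneg (h12 * x + h22 * y)]

end binaryQuadForm

theorem two_mul_le_mul_sq_add_sq_div {a b c : ℝ} (hc : 0 < c) :
    2 * a * b ≤ c * a ^ 2 + b ^ 2 / c := by
  have key : 0 ≤ (c * a - b) ^ 2 / c := by positivity
  have expand : (c * a - b) ^ 2 / c = c * a ^ 2 + b ^ 2 / c - 2 * a * b := by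
    field_simp; ring
  linarith

theorem cross_term_le (h11 h12 h22 μ F k u₀ u₁ v₀ v₁ : ℝ) (hh22 : 0 < h22)
    (hdet : 0 < h11 * h22 - h12 ^ 2) (hμ : 0 < μ) (hF : 0 < F) :
    2 * (k * v₀ * v₁) * (h12 * u₀ + h22 * u₁) ≤
      μ * F⁻¹ * binaryQuadForm h11 h12 h22 v₀ v₁ +
        μ * F * (k / μ) ^ 2 * (h22 ^ 2 / (h11 * h22 - h12 ^ 2)) * v₁ ^ 2 *
          binaryQuadForm h11 h12 h22 u₀ u₁ := by
  set D := h11 * h22 - h12 ^ 2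
  set c := μ * F⁻¹ * D / h22
  have hc : 0 < c := by positivity
  have hv : c * v₀ ^ 2 ≤ μ * F⁻¹ * binaryQuadForm h11 h12 h22 v₀ v₁ := by
    have := binaryQuadForm.det_mul_sq_le h11 h12 h22 v₀ v₁
    calc c * v₀ ^ 2 = μ * F⁻¹ * (D * v₀ ^ 2 / h22) := by ring
      _ ≤ μ * F⁻¹ * binaryQuadForm h11 h12 h22 v₀ v₁ := by
        gcongr
        rwa [div_le_iff₀' hh22]
  have hu : (k * v₁ * (h12 * u₀ + h22 * u₁)) ^ 2 / c ≤
      μ * F * (k / μ) ^ 2 * (h22 ^ 2 / D) * v₁ ^ 2 * binaryQuadForm h11 h12 h22 u₀ u₁ := by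
    have := binaryQuadForm.sq_le_mul h11 h12 h22 u₀ u₁ hdet.le
    calc (k * v₁ * (h12 * u₀ + h22 * u₁)) ^ 2 / c
        = (k * v₁) ^ 2 * F * h22 / (μ * D) * (h12 * u₀ + h22 * u₁) ^ 2 := by
          simp only [c]; field_simp
      _ ≤ (k * v₁) ^ 2 * F * h22 / (μ * D) * (h22 * binaryQuadForm h11 h12 h22 u₀ u₁) := by
          gcongr
      _ = _ := by field_simp
  have := two_mul_le_mul_sq_add_sq_div (a := v₀) (b := k * v₁ * (h12 * u₀ + h22 * u₁)) hc
  linarith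

theorem mulVec_dotProduct_eq_binaryQuadForm (h11 h12 h22 : ℝ) (u : Fin 3 → ℝ) :
    (!![h11, h12, 0; h12, h22, 0; 0, 0, 0] : Matrix (Fin 3) (Fin 3) ℝ).mulVec u ⬝ᵥ u =
      binaryQuadForm h11 h12 h22 (u 0) (u 1) := by
  simp only [dotProduct, mulVec, of_apply, cons_val', cons_val_fin_one, Fin.sum_univ_three,
    cons_val_zero, cons_val_one, cons_val, zero_mul, add_zero, binaryQuadForm]
  ring

theorem mulVec_dotProduct_middle_coord (h11 h12 h22 a : ℝ) (u : Fin 3 → ℝ) :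
    (!![h11, h12, 0; h12, h22, 0; 0, 0, 0] : Matrix (Fin 3) (Fin 3) ℝ).mulVec u ⬝ᵥ ![0, a, 0] =
      a * (h12 * u 0 + h22 * u 1) := by
  simp only [dotProduct, mulVec, of_apply, cons_val', cons_val_fin_one, Fin.sum_univ_three,
    cons_val_zero, cons_val_one, cons_val, zero_mul, add_zero, mul_zero, zero_add]
  ring

theorem g1_estimate_general
    (h11 h22 h12 μ1 m1 τ1 e1 c1 : ℝ)
    (h22p : 0 < h22) (hdet : 0 < h11 * h22 - h12 ^ 2)
    (hμ1 : 0 < μ1) :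
    ∀ u v : Fin 3 → ℝ,
      μ1 * ((!![h11, h12, 0; h12, h22, 0; 0, 0, 0] : Matrix (Fin 3) (Fin 3) ℝ).mulVec u ⬝ᵥ u)
        - μ1 * Real.exp (-m1 * τ1) *
          ((!![h11, h12, 0; h12, h22, 0; 0, 0, 0] : Matrix (Fin 3) (Fin 3) ℝ).mulVec v ⬝ᵥ v)
        + 2 * ((!![h11, h12, 0; h12, h22, 0; 0, 0, 0] : Matrix (Fin 3) (Fin 3) ℝ).mulVec u ⬝ᵥ
            ![0, e1 * c1 * v 0 * v 1, 0])
      ≤ μ1 * (1 + Real.exp (m1 * τ1) * (e1 * c1 / μ1) ^ 2 *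
            (h22 ^ 2 / (h11 * h22 - h12 ^ 2)) * (v 1) ^ 2) *
          ((!![h11, h12, 0; h12, h22, 0; 0, 0, 0] : Matrix (Fin 3) (Fin 3) ℝ).mulVec u ⬝ᵥ u) := by
  intro u v
  rw [mulVec_dotProduct_eq_binaryQuadForm, mulVec_dotProduct_eq_binaryQuadForm,
    mulVec_dotProduct_middle_coord, neg_mul, Real.exp_neg]
  have := cross_term_le h11 h12 h22 μ1 (Real.exp (m1 * τ1)) (e1 * c1) (u 0) (u 1) (v 0) (v 1)
    h22p hdet hμ1 (Real.exp_pos _)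
  linarith

/-- Estimate (55) for the delayed nonlinearity `g1` in the proof of the main theorem. -/
theorem g1_estimate
    (h11 h22 h12 μ1 m1 τ1 e1 c1 : ℝ)
    (h11p : 0 < h11) (h22p : 0 < h22) (hdet : 0 < h11 * h22 - h12 ^ 2)
    (hμ1 : 0 < μ1) (hm1 : 0 < m1) (hτ1 : 0 ≤ τ1) (he1 : 0 ≤ e1) (hc1 : 0 ≤ c1) :
    ∀ u v : Fin 3 → ℝ,
      μ1 * ((!![h11, h12, 0; h12, h22, 0; 0, 0, 0] : Matrix (Fin 3) (Fin 3) ℝ).mulVec u ⬝ᵥ u)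
        - μ1 * Real.exp (-m1 * τ1) *
          ((!![h11, h12, 0; h12, h22, 0; 0, 0, 0] : Matrix (Fin 3) (Fin 3) ℝ).mulVec v ⬝ᵥ v)
        + 2 * ((!![h11, h12, 0; h12, h22, 0; 0, 0, 0] : Matrix (Fin 3) (Fin 3) ℝ).mulVec u ⬝ᵥ
            ![0, e1 * c1 * v 0 * v 1, 0])
      ≤ μ1 * (1 + Real.exp (m1 * τ1) * (e1 * c1 / μ1) ^ 2 *
            (h22 ^ 2 / (h11 * h22 - h12 ^ 2)) * (v 1) ^ 2) *
          ((!![h11, h12, 0; h12, h22, 0; 0, 0, 0] : Matrix (Fin 3) (Fin 3) ℝ).mulVec u ⬝ᵥ u) :=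
  g1_estimate_general h11 h22 h12 μ1 m1 τ1 e1 c1 h22p hdet hμ1
end

section
/- Estimate (61) for the undelayed nonlinearity f: let h11, h22, h33 > 0 and 0 ≤ h12 < √(h11·h22), r, K, c1, c2 > 0, set H = [[h11, h12, 0], [h12, h22, 0], [0, 0, h33]], F(u) = ( -(r/K)·u1² - c1·u1·u2, -c2·u2·u3, 0 ) for u = (u1, u2, u3) ∈ ℝ³, and q = (2/√(1 - h12/√(h11·h22))) · max{ √((r/K)² + c1²) / ( min{√h11, √h22} · √(1 - h12/√(h11·h22)) ), c2/√h33 }. Then for every u ∈ ℝ³: 2·⟨H·u, F(u)⟩ ≤ q·⟨H·u, u⟩^{3/2}. -/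
/-!
Write `a = h11 u₀²`, `b = h22 u₁²`, `c = h33 u₂²` and `θ = 1 - h12 / √(h11 h22)`, so that
`⟨H u, u⟩ ≥ θ (a + b) + c`. Cauchy–Schwarz for the form `H` bounds the first two components of
`H u` by `√(hᵢᵢ ⟨H u, u⟩)`, and Cauchy–Schwarz in `ℝ²` gives
`|F₁(u)| ≤ √((r/K)² + c1²) |u₀| |(u₀, u₁)|`. This reduces the estimate to
`√θ √(a (a + b)) + √(b c) ≤ (θ (a + b) + c) / √θ`, which is AM–GM twice:
`√(a (a + b)) ≤ a + b / 2` and `√(θ b · c) ≤ (θ b + c) / 2`.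
-/

open Matrix

lemma blockDiag_mulVec_dotProduct (h11 h12 h22 h33 : ℝ) (u v : Fin 3 → ℝ) :
    (!![h11, h12, 0; h12, h22, 0; 0, 0, h33] *ᵥ u) ⬝ᵥ v
      = (h11 * u 0 + h12 * u 1) * v 0 + (h12 * u 0 + h22 * u 1) * v 1 + h33 * u 2 * v 2 := by
  simp [mulVec, dotProduct, Fin.sum_univ_three]

lemma blockDiag_mulVec_dotProduct_self (h11 h12 h22 h33 : ℝ) (u : Fin 3 → ℝ) :
    (!![h11, h12, 0; h12, h22, 0; 0, 0, h33] *ᵥ u) ⬝ᵥ u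
      = h11 * u 0 ^ 2 + 2 * h12 * u 0 * u 1 + h22 * u 1 ^ 2 + h33 * u 2 ^ 2 := by
  rw [blockDiag_mulVec_dotProduct]
  ring

lemma Real.sqrt_mul_le_half_add {x y : ℝ} (h : 0 ≤ x + y) : √(x * y) ≤ (x + y) / 2 :=
  Real.sqrt_le_iff.2 ⟨by positivity, by nlinarith [sq_nonneg (x - y)]⟩

lemma abs_mul_add_mul_le_sqrt_mul_sqrt (α β x y : ℝ) :
    |α * x + β * y| ≤ √(α ^ 2 + β ^ 2) * √(x ^ 2 + y ^ 2) := by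
  rw [← Real.sqrt_mul (by positivity)]
  exact Real.abs_le_sqrt (by nlinarith [sq_nonneg (α * y - β * x)])

section QuadForm

variable {h11 h12 h22 : ℝ}

lemma abs_mul_add_mul_le_of_quadForm_le (h11nn : 0 ≤ h11) (h12sq : h12 ^ 2 ≤ h11 * h22)
    {x y V : ℝ} (hV : h11 * x ^ 2 + 2 * h12 * x * y + h22 * y ^ 2 ≤ V) :
    |h11 * x + h12 * y| ≤ √h11 * √V := by
  rw [← Real.sqrt_mul h11nn]
  refine Real.abs_le_sqrt ?_
  nlinarith [mul_nonneg (sub_nonneg.2 h12sq) (sq_nonneg y), mul_le_mul_of_nonneg_left hV h11nn]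

lemma one_sub_div_sqrt_mul_le_quadForm (h11p : 0 < h11) (h22p : 0 < h22) (h12nn : 0 ≤ h12)
    (x y : ℝ) :
    (1 - h12 / √(h11 * h22)) * (h11 * x ^ 2 + h22 * y ^ 2)
      ≤ h11 * x ^ 2 + 2 * h12 * x * y + h22 * y ^ 2 := by
  have gap : h11 * x ^ 2 + 2 * h12 * x * y + h22 * y ^ 2
      - (1 - h12 / √(h11 * h22)) * (h11 * x ^ 2 + h22 * y ^ 2)
      = h12 / (√h11 * √h22) * (√h11 * x + √h22 * y) ^ 2 := by
    rw [Real.sqrt_mul h11p.le]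
    field_simp
    linear_combination (-h12 * x ^ 2) * Real.sq_sqrt h11p.le - (h12 * y ^ 2) * Real.sq_sqrt h22p.le
  have : 0 ≤ h12 / (√h11 * √h22) * (√h11 * x + √h22 * y) ^ 2 := by positivity
  linarith

lemma sqrt_sq_add_sq_le_div_min_sqrt (h11p : 0 < h11) (h22p : 0 < h22) (x y : ℝ) :
    √(x ^ 2 + y ^ 2) ≤ √(h11 * x ^ 2 + h22 * y ^ 2) / min √h11 √h22 := by
  have hm : 0 < min √h11 √h22 := lt_min (Real.sqrt_pos.2 h11p) (Real.sqrt_pos.2 h22p)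
  have hm1 : min √h11 √h22 ^ 2 ≤ h11 :=
    (pow_le_pow_left₀ hm.le (min_le_left _ _) 2).trans (Real.sq_sqrt h11p.le).le
  have hm2 : min √h11 √h22 ^ 2 ≤ h22 :=
    (pow_le_pow_left₀ hm.le (min_le_right _ _) 2).trans (Real.sq_sqrt h22p.le).le
  rw [le_div_iff₀ hm, ← Real.sqrt_sq hm.le, ← Real.sqrt_mul (by positivity)]
  gcongr
  nlinarith [mul_le_mul_of_nonneg_right hm1 (sq_nonneg x),
    mul_le_mul_of_nonneg_right hm2 (sq_nonneg y)]

end QuadForm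

lemma sqrt_mul_add_sqrt_mul_le {θ a b c : ℝ} (hθ : 0 < θ) (ha : 0 ≤ a) (hb : 0 ≤ b)
    (hc : 0 ≤ c) :
    √θ * √(a * (a + b)) + √(b * c) ≤ (θ * (a + b) + c) / √θ := by
  have hsθ := Real.sqrt_pos.2 hθ
  have h1 := Real.sqrt_mul_le_half_add (x := a) (y := a + b) (by positivity)
  have h2 := Real.sqrt_mul_le_half_add (x := θ * b) (y := c) (by positivity)
  rw [mul_assoc, Real.sqrt_mul (by positivity)] at h2
  rw [le_div_iff₀ hsθ]
  nlinarith [Real.mul_self_sqrt hθ.le, Real.sqrt_nonneg (b * c)]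

section Terms

variable {h11 h12 h22 : ℝ}

lemma first_component_term_le (h11p : 0 < h11) (h22p : 0 < h22) (h12sq : h12 ^ 2 ≤ h11 * h22)
    (α β : ℝ) {x y V : ℝ} (hV : h11 * x ^ 2 + 2 * h12 * x * y + h22 * y ^ 2 ≤ V) :
    (h11 * x + h12 * y) * (-α * x ^ 2 - β * x * y)
      ≤ √V * (√(α ^ 2 + β ^ 2) / min √h11 √h22 *
          √(h11 * x ^ 2 * (h11 * x ^ 2 + h22 * y ^ 2))) := by
  calc (h11 * x + h12 * y) * (-α * x ^ 2 - β * x * y)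
      = -((h11 * x + h12 * y) * (x * (α * x + β * y))) := by ring
    _ ≤ |(h11 * x + h12 * y) * (x * (α * x + β * y))| := neg_le_abs _
    _ = |h11 * x + h12 * y| * (|x| * |α * x + β * y|) := by rw [abs_mul, abs_mul]
    _ ≤ (√h11 * √V) * (|x| * (√(α ^ 2 + β ^ 2) *
          (√(h11 * x ^ 2 + h22 * y ^ 2) / min √h11 √h22))) := by
        gcongr
        · exact abs_mul_add_mul_le_of_quadForm_le h11p.le h12sq hV
        · exact (abs_mul_add_mul_le_sqrt_mul_sqrt α β x y).trans
            (by gcongr; exact sqrt_sq_add_sq_le_div_min_sqrt h11p h22p x y)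
    _ = _ := by
        rw [Real.sqrt_mul (by positivity), Real.sqrt_mul h11p.le, Real.sqrt_sq_eq_abs]
        ring

lemma second_component_term_le {h33 : ℝ} (h22p : 0 < h22) (h33p : 0 < h33)
    (h12sq : h12 ^ 2 ≤ h11 * h22) {γ : ℝ} (hγ : 0 ≤ γ) {x y z V : ℝ}
    (hV : h11 * x ^ 2 + 2 * h12 * x * y + h22 * y ^ 2 ≤ V) :
    (h12 * x + h22 * y) * (-γ * y * z) ≤ √V * (γ / √h33 * √(h22 * y ^ 2 * (h33 * z ^ 2))) := by
  have hrow : |h22 * y + h12 * x| ≤ √h22 * √V :=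
    abs_mul_add_mul_le_of_quadForm_le (h22 := h11) h22p.le (by linarith) (by linarith)
  calc (h12 * x + h22 * y) * (-γ * y * z)
      = -((h22 * y + h12 * x) * (γ * y * z)) := by ring
    _ ≤ |(h22 * y + h12 * x) * (γ * y * z)| := neg_le_abs _
    _ = |h22 * y + h12 * x| * (γ * |y| * |z|) := by
        rw [abs_mul, abs_mul, abs_mul, abs_of_nonneg hγ]
    _ ≤ (√h22 * √V) * (γ * |y| * |z|) := by gcongr
    _ = _ := by
        rw [Real.sqrt_mul (by positivity), Real.sqrt_mul h22p.le, Real.sqrt_mul h33p.le,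
          Real.sqrt_sq_eq_abs, Real.sqrt_sq_eq_abs]
        field_simp

end Terms

lemma Real.rpow_three_halves_eq_mul_sqrt {x : ℝ} (hx : 0 ≤ x) : x ^ (3 / 2 : ℝ) = x * √x := by
  rw [show (3 / 2 : ℝ) = 1 + 1 / 2 by norm_num, Real.rpow_add' hx (by norm_num), Real.rpow_one,
    Real.sqrt_eq_rpow]

lemma mul_sqrt_mul_add_mul_sqrt_mul_le {θ a b c V B : ℝ} (A : ℝ) (hθ : 0 < θ) (ha : 0 ≤ a)
    (hb : 0 ≤ b) (hc : 0 ≤ c) (hB : 0 ≤ B) (hV : θ * (a + b) + c ≤ V) :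
    A * √(a * (a + b)) + B * √(b * c) ≤ max (A / √θ) B * (V / √θ) := by
  have hsθ := Real.sqrt_pos.2 hθ
  have hM : 0 ≤ max (A / √θ) B := hB.trans (le_max_right _ B)
  calc A * √(a * (a + b)) + B * √(b * c)
      = A / √θ * √θ * √(a * (a + b)) + B * √(b * c) := by field_simp
    _ ≤ max (A / √θ) B * √θ * √(a * (a + b)) + max (A / √θ) B * √(b * c) := by
        gcongr
        exacts [le_max_left _ B, le_max_right _ B]
    _ = max (A / √θ) B * (√θ * √(a * (a + b)) + √(b * c)) := by ring
    _ ≤ max (A / √θ) B * (V / √θ) := by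
        gcongr
        exact (sqrt_mul_add_sqrt_mul_le hθ ha hb hc).trans (by gcongr)

theorem f_estimate_general
    (h11 h22 h12 h33 r K c1 c2 : ℝ)
    (h11p : 0 < h11) (h22p : 0 < h22) (h33p : 0 < h33)
    (h12nn : 0 ≤ h12) (h12lt : h12 < Real.sqrt (h11 * h22))
    (hc2 : 0 < c2) :
    ∀ u : Fin 3 → ℝ,
      2 * ((!![h11, h12, 0; h12, h22, 0; 0, 0, h33] : Matrix (Fin 3) (Fin 3) ℝ).mulVec u ⬝ᵥ
          ![-(r / K) * (u 0) ^ 2 - c1 * u 0 * u 1, -c2 * u 1 * u 2, 0])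
        ≤ (2 / Real.sqrt (1 - h12 / Real.sqrt (h11 * h22)) *
              max (Real.sqrt ((r / K) ^ 2 + c1 ^ 2) /
                  (min (Real.sqrt h11) (Real.sqrt h22) *
                    Real.sqrt (1 - h12 / Real.sqrt (h11 * h22))))
                (c2 / Real.sqrt h33)) *
            ((!![h11, h12, 0; h12, h22, 0; 0, 0, h33] : Matrix (Fin 3) (Fin 3) ℝ).mulVec u ⬝ᵥ u)
              ^ ((3 : ℝ) / 2) := by
  intro u
  set θ := 1 - h12 / √(h11 * h22)
  have hθ : 0 < θ := sub_pos.2 ((div_lt_one (h12nn.trans_lt h12lt)).2 h12lt)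
  have h12sq : h12 ^ 2 ≤ h11 * h22 := by
    nlinarith [Real.sq_sqrt (mul_nonneg h11p.le h22p.le)]
  rw [blockDiag_mulVec_dotProduct, blockDiag_mulVec_dotProduct_self, ← div_div]
  simp only [cons_val_zero, cons_val_one, cons_val, mul_zero, add_zero]
  generalize u 0 = x, u 1 = y, u 2 = z
  have hQV := le_add_of_nonneg_right (a := h11 * x ^ 2 + 2 * h12 * x * y + h22 * y ^ 2)
    (mul_nonneg h33p.le (sq_nonneg z))
  have hθV : θ * (h11 * x ^ 2 + h22 * y ^ 2) + h33 * z ^ 2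
      ≤ h11 * x ^ 2 + 2 * h12 * x * y + h22 * y ^ 2 + h33 * z ^ 2 := by
    linarith [one_sub_div_sqrt_mul_le_quadForm h11p h22p h12nn x y]
  generalize h11 * x ^ 2 + 2 * h12 * x * y + h22 * y ^ 2 + h33 * z ^ 2 = V at hQV hθV ⊢
  have hV : 0 ≤ V := le_trans (by positivity) hθV
  have hT1 := first_component_term_le h11p h22p h12sq (r / K) c1 hQV
  have hT2 := second_component_term_le h22p h33p h12sq hc2.le (z := z) hQV
  have hmix := mul_sqrt_mul_add_mul_sqrt_mul_le (√((r / K) ^ 2 + c1 ^ 2) / min √h11 √h22) hθ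
    (mul_nonneg h11p.le (sq_nonneg x)) (mul_nonneg h22p.le (sq_nonneg y))
    (mul_nonneg h33p.le (sq_nonneg z)) (by positivity : 0 ≤ c2 / √h33) hθV
  rw [Real.rpow_three_halves_eq_mul_sqrt hV]
  linear_combination 2 * hT1 + 2 * hT2 + 2 * mul_le_mul_of_nonneg_left hmix (Real.sqrt_nonneg V)

/-- Estimate (61) for the undelayed nonlinearity `f` in the proof of the main theorem:
`2⟨H u, F(u)⟩ ≤ q ⟨H u, u⟩^{3/2}` with the constant `q` of formula (44). -/
theorem f_estimate
    (h11 h22 h12 h33 r K c1 c2 : ℝ)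
    (h11p : 0 < h11) (h22p : 0 < h22) (h33p : 0 < h33)
    (h12nn : 0 ≤ h12) (h12lt : h12 < Real.sqrt (h11 * h22))
    (hr : 0 < r) (hK : 0 < K) (hc1 : 0 < c1) (hc2 : 0 < c2) :
    ∀ u : Fin 3 → ℝ,
      2 * ((!![h11, h12, 0; h12, h22, 0; 0, 0, h33] : Matrix (Fin 3) (Fin 3) ℝ).mulVec u ⬝ᵥ
          ![-(r / K) * (u 0) ^ 2 - c1 * u 0 * u 1, -c2 * u 1 * u 2, 0])
        ≤ (2 / Real.sqrt (1 - h12 / Real.sqrt (h11 * h22)) *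
              max (Real.sqrt ((r / K) ^ 2 + c1 ^ 2) /
                  (min (Real.sqrt h11) (Real.sqrt h22) *
                    Real.sqrt (1 - h12 / Real.sqrt (h11 * h22))))
                (c2 / Real.sqrt h33)) *
            ((!![h11, h12, 0; h12, h22, 0; 0, 0, h33] : Matrix (Fin 3) (Fin 3) ℝ).mulVec u ⬝ᵥ u)
              ^ ((3 : ℝ) / 2) :=
  f_estimate_general h11 h22 h12 h33 r K c1 c2 h11p h22p h33p h12nn h12lt hc2
end

section
/- Nonlinear Gronwall-type comparison lemma: let ε > 0, q > 0 and T > 0, and let V : [0, T] → ℝ be continuous, nonnegative, differentiable on (0, T), and satisfy V'(t) ≤ -ε·V(t) + q·V(t)^{3/2} for all t ∈ (0, T), together with √(V(0)) < ε/q. Then for all t ∈ [0, T]: V(t) ≤ V(0)·e^{-ε·t} / (1 - (q/ε)·√(V(0)))². -/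
/-!
Comparison with the explicit solution of the Bernoulli equation `y' = -ε y + p y^{3/2}`. Since `V`
is only known to be differentiable on the open interval, the comparison needs strict inequalities,
so one compares `V` with the solution for the coefficient `p = q + η` and initial value `V 0 + η`,
bounds that solution by dropping the constant term of its linearized form, and lets `η → 0`.
-/

open Set Filter Topology Real

theorem image_le_of_hasDerivAt_lt_deriv_boundary_of_lt {f f' B B' : ℝ → ℝ} {a b : ℝ}
    (hf : ContinuousOn f (Icc a b)) (hf' : ∀ x ∈ Ioo a b, HasDerivAt f (f' x) x)
    (hB : ∀ x, HasDerivAt B (B' x) x) (ha : f a < B a)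
    (bound : ∀ x ∈ Ioo a b, f x = B x → f' x < B' x) :
    ∀ ⦃x⦄, x ∈ Icc a b → f x ≤ B x := by
  intro x ⟨hax, hxb⟩
  rcases hax.eq_or_lt with rfl | hax
  · exact ha.le
  have hf_lt_B : ∀ᶠ s in 𝓝[>] a, f s < B s := by
    have hcont : ContinuousWithinAt (fun s => B s - f s) (Icc a b) a :=
      (hB a).continuousAt.continuousWithinAt.sub (hf a ⟨le_rfl, (hax.trans_le hxb).le⟩)
    exact (Tendsto.eventually_const_lt (sub_pos.2 ha)
      (hcont.mono_of_mem_nhdsWithin (Icc_mem_nhdsGT_of_mem ⟨le_rfl, hax.trans_le hxb⟩))).mono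
      fun s hs => sub_pos.1 hs
  obtain ⟨s, ⟨has, hsx⟩, hs⟩ := (Eventually.and (Ioo_mem_nhdsGT hax) hf_lt_B).exists
  refine image_le_of_deriv_right_lt_deriv_boundary (hf.mono (Icc_subset_Icc has.le le_rfl))
    (fun y hy => (hf' y ⟨has.trans_le hy.1, hy.2⟩).hasDerivWithinAt) hs.le hB
    (fun y hy => bound y ⟨has.trans_le hy.1, hy.2⟩) ⟨hsx.le, hxb⟩

lemma sq_rpow_three_halves {x : ℝ} (hx : 0 ≤ x) : (x ^ 2) ^ (3 / 2 : ℝ) = x ^ 3 := by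
  rw [← Real.rpow_natCast, ← Real.rpow_mul hx]
  norm_num

/-- `w = y^{-1/2}` turns `y' = -ε y + p y^{3/2}` into the linear `w' = (ε / 2) w - p / 2`; this is
`y = w⁻²` for its solution with `y 0 = c ^ 2`. -/
noncomputable def bernoulliSolution (ε p c t : ℝ) : ℝ :=
  (c / (p / ε * c + (1 - p / ε * c) * exp (ε * t / 2))) ^ 2

section bernoulliSolution

variable {ε p c : ℝ}

lemma bernoulliSolution_zero : bernoulliSolution ε p c 0 = c ^ 2 := by
  simp [bernoulliSolution]

lemma bernoulli_denom_pos (hk₀ : 0 ≤ p / ε * c) (hk₁ : p / ε * c < 1) (t : ℝ) :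
    0 < p / ε * c + (1 - p / ε * c) * exp (ε * t / 2) := by
  have := exp_pos (ε * t / 2)
  have : 0 < 1 - p / ε * c := by linarith
  positivity

lemma hasDerivAt_bernoulliSolution (hε : ε ≠ 0) (hc : 0 ≤ c) (hk₀ : 0 ≤ p / ε * c)
    (hk₁ : p / ε * c < 1) (t : ℝ) :
    HasDerivAt (bernoulliSolution ε p c)
      (-ε * bernoulliSolution ε p c t + p * bernoulliSolution ε p c t ^ (3 / 2 : ℝ)) t := by
  set k := p / ε * c with hk
  set D : ℝ → ℝ := fun t => k + (1 - k) * exp (ε * t / 2)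
  have hD : ∀ t, 0 < D t := bernoulli_denom_pos hk₀ hk₁
  have hD' : HasDerivAt D ((1 - k) * (exp (ε * t / 2) * (ε / 2))) t := by
    refine ((HasDerivAt.exp ?_).const_mul _).const_add k
    simpa using ((hasDerivAt_id t).const_mul ε).div_const 2
  have hu : HasDerivAt (fun t => c / D t) (-(ε / 2) * (c / D t) + p / 2 * (c / D t) ^ 2) t := by
    refine ((hasDerivAt_const t c).div hD' (hD t).ne').congr_deriv ?_
    have hDt := (hD t).ne'
    simp only [D, hk] at hDt ⊢
    field_simp
    ring
  have hu₀ : 0 ≤ c / D t := div_nonneg hc (hD t).le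
  refine (hu.pow 2).congr_deriv ?_
  show _ = -ε * (c / D t) ^ 2 + p * ((c / D t) ^ 2) ^ (3 / 2 : ℝ)
  rw [sq_rpow_three_halves hu₀]
  norm_num
  ring

lemma bernoulliSolution_pos (hc : 0 < c) (hk₀ : 0 ≤ p / ε * c) (hk₁ : p / ε * c < 1)
    (t : ℝ) :
    0 < bernoulliSolution ε p c t :=
  pow_pos (div_pos hc (bernoulli_denom_pos hk₀ hk₁ t)) 2

lemma bernoulliSolution_le (hk₀ : 0 ≤ p / ε * c) (hk₁ : p / ε * c < 1) (t : ℝ) :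
    bernoulliSolution ε p c t ≤ c ^ 2 * exp (-ε * t) / (1 - p / ε * c) ^ 2 := by
  have hk : 0 < 1 - p / ε * c := by linarith
  have hlow : (1 - p / ε * c) * exp (ε * t / 2) ≤
      p / ε * c + (1 - p / ε * c) * exp (ε * t / 2) := by linarith
  calc bernoulliSolution ε p c t
      = c ^ 2 / (p / ε * c + (1 - p / ε * c) * exp (ε * t / 2)) ^ 2 := div_pow _ _ _
    _ ≤ c ^ 2 / ((1 - p / ε * c) * exp (ε * t / 2)) ^ 2 := by gcongr
    _ = c ^ 2 * exp (-ε * t) / (1 - p / ε * c) ^ 2 := by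
      rw [mul_pow, ← exp_nat_mul, neg_mul, exp_neg]
      field_simp
      ring_nf

end bernoulliSolution

lemma le_bernoulliSolution_of_deriv_le {ε q p c T : ℝ} {V V' : ℝ → ℝ} (hε : ε ≠ 0)
    (hVc : ContinuousOn V (Icc 0 T)) (hVd : ∀ t ∈ Ioo 0 T, HasDerivAt V (V' t) t)
    (hVineq : ∀ t ∈ Ioo 0 T, V' t ≤ -ε * V t + q * V t ^ (3 / 2 : ℝ))
    (hqp : q < p) (hc : 0 < c) (hk₀ : 0 ≤ p / ε * c) (hk₁ : p / ε * c < 1)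
    (hV0 : V 0 < c ^ 2) :
    ∀ ⦃t⦄, t ∈ Icc 0 T → V t ≤ bernoulliSolution ε p c t := by
  refine image_le_of_hasDerivAt_lt_deriv_boundary_of_lt hVc hVd
    (hasDerivAt_bernoulliSolution hε hc.le hk₀ hk₁) (by rwa [bernoulliSolution_zero]) ?_
  intro x hx hVx
  have hpow : 0 < bernoulliSolution ε p c x ^ (3 / 2 : ℝ) :=
    rpow_pos_of_pos (bernoulliSolution_pos hc hk₀ hk₁ x) _
  calc V' x ≤ -ε * V x + q * V x ^ (3 / 2 : ℝ) := hVineq x hx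
    _ < -ε * bernoulliSolution ε p c x + p * bernoulliSolution ε p c x ^ (3 / 2 : ℝ) := by
      rw [hVx]; gcongr

/-- Nonlinear Gronwall-type comparison lemma for the differential inequality
`V' ≤ -ε V + q V^{3/2}` (inequality (63)). -/
theorem gronwall_nonlinear_comparison
    (ε q T : ℝ) (hε : 0 < ε) (hq : 0 < q) (hT : 0 < T)
    (V V' : ℝ → ℝ)
    (hVc : ContinuousOn V (Set.Icc 0 T))
    (hVnn : ∀ t ∈ Set.Icc (0:ℝ) T, 0 ≤ V t)
    (hVd : ∀ t ∈ Set.Ioo (0:ℝ) T, HasDerivAt V (V' t) t)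
    (hVineq : ∀ t ∈ Set.Ioo (0:ℝ) T, V' t ≤ -ε * V t + q * (V t) ^ ((3 : ℝ) / 2))
    (hsmall : Real.sqrt (V 0) < ε / q) :
    ∀ t ∈ Set.Icc (0:ℝ) T,
      V t ≤ V 0 * Real.exp (-ε * t) / (1 - q / ε * Real.sqrt (V 0)) ^ 2 := by
  intro t ht
  have hV0 : 0 ≤ V 0 := hVnn 0 ⟨le_rfl, hT.le⟩
  have hk : q / ε * √(V 0) < 1 := by
    rwa [div_mul_eq_mul_div, div_lt_one hε, mul_comm, ← lt_div_iff₀ hq]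
  let k : ℝ → ℝ := fun η => (q + η) / ε * √(V 0 + η)
  let F : ℝ → ℝ := fun η => (V 0 + η) * exp (-ε * t) / (1 - k η) ^ 2
  have hk_cont : Continuous k := by fun_prop
  have hF : ContinuousAt F 0 := by
    have hden : (1 - k 0) ^ 2 ≠ 0 := by simp [k]; linarith
    exact (by fun_prop : Continuous fun η => (V 0 + η) * exp (-ε * t)).continuousAt.div
      (by fun_prop : Continuous fun η => (1 - k η) ^ 2).continuousAt hden
  have hk_lt : ∀ᶠ η in 𝓝[>] 0, k η < 1 :=
    ((hk_cont.tendsto' 0 _ (by simp [k])).eventually_lt_const hk).filter_mono nhdsWithin_le_nhds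
  have hF0 : F 0 = V 0 * exp (-ε * t) / (1 - q / ε * √(V 0)) ^ 2 := by simp [F, k]
  refine hF0 ▸ ge_of_tendsto (hF.tendsto.mono_left (nhdsWithin_le_nhds (s := Ioi 0))) ?_
  filter_upwards [self_mem_nhdsWithin, hk_lt] with η (hη : 0 < η) hkη
  have hc : 0 < √(V 0 + η) := sqrt_pos.2 (by linarith)
  have hk₀ : 0 ≤ k η := by positivity
  calc V t ≤ bernoulliSolution ε (q + η) √(V 0 + η) t :=
        le_bernoulliSolution_of_deriv_le hε.ne' hVc hVd hVineq (by linarith) hc hk₀ hkη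
          (by rw [sq_sqrt (by linarith)]; linarith) ht
    _ ≤ √(V 0 + η) ^ 2 * exp (-ε * t) / (1 - k η) ^ 2 := bernoulliSolution_le hk₀ hkη t
    _ = F η := by rw [sq_sqrt (by linarith)]
end
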